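/- arXiv:1108.5940 — 7 statements merged into one kernel-verified Lean document; each statement's English description precedes it below -/
import Mathlib

section
/- Let E, C : (0,∞) → [0,∞) be functions, let a, b > 0 and let Ê, Ĉ ∈ (0,∞) be such that ε^{-a} E(ε) → Ê and ε^{b} C(ε) → Ĉ as ε → 0⁺. Then for all sufficiently large c > 0 the set {ε > 0 : C(ε) < c} is nonempty and ε(c) := inf{ε > 0 : C(ε) < c} is strictly positive, and the function Ē(c) := E(ε(c)) satisfies Ē(c) · c^{a/b} → Ĉ^{a/b} · Ê as c → ∞; that is, Ē(c) is asymptotically equivalent to c^{-a/b} Ĉ^{a/b} Ê. -/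
/-!
Write `ε(c)` for the infimum of the sublevel set `{ε > 0 : C ε < c}`. Since `ε ^ b * C ε → Ĉ`,
for `l < Ĉ < u` and large `c` the sublevel set contains the point `ε` with `c * ε ^ b = u`
and lies in `{ε : l ≤ c * ε ^ b}`, so `c * ε(c) ^ b → Ĉ`; in particular `ε(c) → 0⁺`. The
claim then follows from the identity
`E (ε(c)) * c ^ (a / b) = (ε(c) ^ (-a) * E (ε(c))) * (c * ε(c) ^ b) ^ (a / b)`.
-/

open Filter Topology Set

def costSublevel (C : ℝ → ℝ) (c : ℝ) : Set ℝ := {ε | 0 < ε ∧ C ε < c}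

noncomputable def epsOfCost (C : ℝ → ℝ) (c : ℝ) : ℝ := sInf (costSublevel C c)

lemma le_mul_rpow_csInf {S : Set ℝ} {b c l : ℝ} (hb : 0 < b) (hc : 0 < c) (hl : 0 < l)
    (hS : S.Nonempty) (hpos : ∀ ε ∈ S, 0 < ε) (h : ∀ ε ∈ S, l ≤ c * ε ^ b) :
    l ≤ c * sInf S ^ b := by
  have hroot : (l / c) ^ b⁻¹ ≤ sInf S := le_csInf hS fun ε hε =>
    (Real.rpow_inv_le_iff_of_pos (div_pos hl hc).le (hpos ε hε).le hb).2
      ((div_le_iff₀' hc).2 (h ε hε))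
  have hinf : 0 ≤ sInf S := le_csInf hS fun ε hε => (hpos ε hε).le
  exact (div_le_iff₀' hc).1 ((Real.rpow_inv_le_iff_of_pos (div_pos hl hc).le hinf hb).1 hroot)

section Sublevel

variable {C : ℝ → ℝ} {b L : ℝ}

lemma eventually_exists_mem_costSublevel_mul_rpow_eq (hb : 0 < b)
    (hC : Tendsto (fun ε => ε ^ b * C ε) (𝓝[>] 0) (𝓝 L)) {u : ℝ} (hu0 : 0 < u) (hu : L < u) :
    ∀ᶠ c in atTop, ∃ ε ∈ costSublevel C c, c * ε ^ b = u := by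
  obtain ⟨δ, hδ : 0 < δ, hδC⟩ :=
    mem_nhdsGT_iff_exists_Ioo_subset.1 (hC.eventually (eventually_lt_nhds hu))
  have hδb : 0 < δ ^ b := Real.rpow_pos_of_pos hδ b
  filter_upwards [eventually_gt_atTop (u / δ ^ b), eventually_gt_atTop 0] with c hcδ hc
  have huc : 0 < u / c := div_pos hu0 hc
  set ε := (u / c) ^ b⁻¹
  have hε : 0 < ε := Real.rpow_pos_of_pos huc _
  have hεb : ε ^ b = u / c := Real.rpow_inv_rpow huc.le hb.ne'
  have hεδ : ε < δ := by
    rw [Real.rpow_inv_lt_iff_of_pos huc.le hδ.le hb, div_lt_iff₀ hc]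
    rwa [div_lt_iff₀ hδb, mul_comm] at hcδ
  have hCε : u / c * C ε < u := hεb ▸ hδC ⟨hε, hεδ⟩
  refine ⟨ε, ⟨hε, ?_⟩, by rw [hεb]; field_simp⟩
  rw [div_mul_eq_mul_div, div_lt_iff₀ hc] at hCε
  exact lt_of_mul_lt_mul_left hCε hu0.le

lemma eventually_le_mul_rpow_of_mem_costSublevel (hb : 0 ≤ b)
    (hC : Tendsto (fun ε => ε ^ b * C ε) (𝓝[>] 0) (𝓝 L)) {l : ℝ} (hl : l < L) :
    ∀ᶠ c in atTop, ∀ ε ∈ costSublevel C c, l ≤ c * ε ^ b := by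
  obtain ⟨δ, hδ : 0 < δ, hδC⟩ :=
    mem_nhdsGT_iff_exists_Ioo_subset.1 (hC.eventually (eventually_gt_nhds hl))
  have hδb : 0 < δ ^ b := Real.rpow_pos_of_pos hδ b
  filter_upwards [(tendsto_id.atTop_mul_const hδb).eventually_ge_atTop l,
    eventually_gt_atTop 0] with c hcδ hc ε ⟨hε, hCε⟩
  rcases lt_or_ge ε δ with hεδ | hδε
  · calc l ≤ ε ^ b * C ε := (hδC ⟨hε, hεδ⟩).le
      _ ≤ ε ^ b * c := by gcongr
      _ = c * ε ^ b := mul_comm _ _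
  · calc l ≤ c * δ ^ b := hcδ
      _ ≤ c * ε ^ b := by gcongr

lemma eventually_mul_rpow_epsOfCost_le (hb : 0 < b)
    (hC : Tendsto (fun ε => ε ^ b * C ε) (𝓝[>] 0) (𝓝 L)) {u : ℝ} (hu0 : 0 < u) (hu : L < u) :
    ∀ᶠ c in atTop, (costSublevel C c).Nonempty ∧ c * epsOfCost C c ^ b ≤ u := by
  filter_upwards [eventually_exists_mem_costSublevel_mul_rpow_eq hb hC hu0 hu,
    eventually_gt_atTop 0] with c ⟨ε, hεS, hεu⟩ hc
  have hS : (costSublevel C c).Nonempty := ⟨ε, hεS⟩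
  have hinf : 0 ≤ epsOfCost C c := le_csInf hS fun ε hε => hε.1.le
  refine ⟨hS, hεu ▸ ?_⟩
  gcongr
  exact csInf_le ⟨0, fun ε hε => hε.1.le⟩ hεS

lemma eventually_le_mul_rpow_epsOfCost (hb : 0 < b)
    (hC : Tendsto (fun ε => ε ^ b * C ε) (𝓝[>] 0) (𝓝 L)) {l : ℝ} (hl0 : 0 < l) (hl : l < L) :
    ∀ᶠ c in atTop, (costSublevel C c).Nonempty ∧ l ≤ c * epsOfCost C c ^ b := by
  filter_upwards [eventually_mul_rpow_epsOfCost_le hb hC (hl0.trans hl |>.trans (lt_add_one L))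
      (lt_add_one L), eventually_le_mul_rpow_of_mem_costSublevel hb.le hC hl,
    eventually_gt_atTop 0] with c ⟨hS, _⟩ hlS hc
  exact ⟨hS, le_mul_rpow_csInf hb hc hl0 hS (fun ε hε => hε.1) hlS⟩

lemma eventually_epsOfCost_pos (hb : 0 < b) (hL : 0 < L)
    (hC : Tendsto (fun ε => ε ^ b * C ε) (𝓝[>] 0) (𝓝 L)) :
    ∀ᶠ c in atTop, (costSublevel C c).Nonempty ∧ 0 < epsOfCost C c := by
  filter_upwards [eventually_le_mul_rpow_epsOfCost hb hC (half_pos hL) (half_lt_self hL)]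
    with c ⟨hS, hle⟩
  have hinf : 0 ≤ epsOfCost C c := le_csInf hS fun ε hε => hε.1.le
  refine ⟨hS, hinf.lt_of_ne' fun h0 => ?_⟩
  rw [h0, Real.zero_rpow hb.ne', mul_zero] at hle
  linarith

lemma tendsto_mul_rpow_epsOfCost (hb : 0 < b) (hL : 0 < L)
    (hC : Tendsto (fun ε => ε ^ b * C ε) (𝓝[>] 0) (𝓝 L)) :
    Tendsto (fun c => c * epsOfCost C c ^ b) atTop (𝓝 L) := by
  refine tendsto_order.2 ⟨fun l hl => ?_, fun u hu => ?_⟩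
  · obtain ⟨l', hll', hl'L⟩ := exists_between (max_lt hl hL)
    filter_upwards [eventually_le_mul_rpow_epsOfCost hb hC ((le_max_right l 0).trans_lt hll')
      hl'L] with c ⟨_, hle⟩
    exact (le_max_left l 0).trans_lt hll' |>.trans_le hle
  · obtain ⟨u', hLu', hu'u⟩ := exists_between hu
    filter_upwards [eventually_mul_rpow_epsOfCost_le hb hC (hL.trans hLu') hLu'] with c ⟨_, hle⟩
    exact hle.trans_lt hu'u

lemma tendsto_epsOfCost_nhdsGT_zero (hb : 0 < b) (hL : 0 < L)
    (hC : Tendsto (fun ε => ε ^ b * C ε) (𝓝[>] 0) (𝓝 L)) :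
    Tendsto (epsOfCost C) atTop (𝓝[>] 0) := by
  have hpos := eventually_epsOfCost_pos hb hL hC
  have hpow : Tendsto (fun c => epsOfCost C c ^ b) atTop (𝓝 0) := by
    have := (tendsto_mul_rpow_epsOfCost hb hL hC).mul tendsto_inv_atTop_zero
    rw [mul_zero] at this
    refine this.congr' ?_
    filter_upwards [eventually_gt_atTop 0] with c hc
    field_simp
  have hroot := hpow.rpow_const (p := b⁻¹) (Or.inr (inv_nonneg.2 hb.le))
  rw [Real.zero_rpow (inv_ne_zero hb.ne')] at hroot
  refine tendsto_nhdsWithin_iff.2 ⟨hroot.congr' ?_, hpos.mono fun c hc => hc.2⟩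
  filter_upwards [hpos] with c hc
  exact Real.rpow_rpow_inv hc.2.le hb.ne'

end Sublevel

theorem stmt0_general (E C : ℝ → ℝ) (a b Ehat Chat : ℝ)
    (hb : 0 < b) (hChat : 0 < Chat)
    (hE : Tendsto (fun ε : ℝ => ε ^ (-a) * E ε) (𝓝[>] 0) (𝓝 Ehat))
    (hC : Tendsto (fun ε : ℝ => ε ^ b * C ε) (𝓝[>] 0) (𝓝 Chat)) :
    (∀ᶠ c : ℝ in atTop, {ε : ℝ | 0 < ε ∧ C ε < c}.Nonempty ∧
        0 < sInf {ε : ℝ | 0 < ε ∧ C ε < c}) ∧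
      Tendsto (fun c : ℝ => E (sInf {ε : ℝ | 0 < ε ∧ C ε < c}) * c ^ (a / b))
        atTop (𝓝 (Chat ^ (a / b) * Ehat)) := by
  have hpos := eventually_epsOfCost_pos hb hChat hC
  refine ⟨hpos, ?_⟩
  have hlim := ((tendsto_mul_rpow_epsOfCost hb hChat hC).rpow_const (p := a / b)
    (Or.inl hChat.ne')).mul (hE.comp (tendsto_epsOfCost_nhdsGT_zero hb hChat hC))
  refine hlim.congr' ?_
  filter_upwards [hpos, eventually_gt_atTop 0] with c ⟨_, hε⟩ hc
  change (c * epsOfCost C c ^ b) ^ (a / b) * (epsOfCost C c ^ (-a) * E (epsOfCost C c)) =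
    E (epsOfCost C c) * c ^ (a / b)
  rw [Real.mul_rpow hc.le (Real.rpow_nonneg hε.le b), ← Real.rpow_mul hε.le,
    mul_div_cancel₀ a hb.ne', Real.rpow_neg hε.le]
  field_simp [(Real.rpow_pos_of_pos hε a).ne']

/-- Under power-law asymptotics of the error functional `E` and the cost
functional `C` near `ε = 0⁺`, for all sufficiently large costs `c` the set
`{ε > 0 : C ε < c}` is nonempty with strictly positive infimum `ε(c)`, and the error for
cost `c`, `Ē(c) = E (ε(c))`, satisfies `Ē(c) ∼ c^{-a/b} Ĉ^{a/b} Ê` as `c → ∞`. -/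
theorem stmt0 (E C : ℝ → ℝ) (a b Ehat Chat : ℝ)
    (hEnn : ∀ ε : ℝ, 0 < ε → 0 ≤ E ε) (hCnn : ∀ ε : ℝ, 0 < ε → 0 ≤ C ε)
    (ha : 0 < a) (hb : 0 < b) (hEhat : 0 < Ehat) (hChat : 0 < Chat)
    (hE : Tendsto (fun ε : ℝ => ε ^ (-a) * E ε) (𝓝[>] 0) (𝓝 Ehat))
    (hC : Tendsto (fun ε : ℝ => ε ^ b * C ε) (𝓝[>] 0) (𝓝 Chat)) :
    (∀ᶠ c : ℝ in atTop, {ε : ℝ | 0 < ε ∧ C ε < c}.Nonempty ∧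
        0 < sInf {ε : ℝ | 0 < ε ∧ C ε < c}) ∧
      Tendsto (fun c : ℝ => E (sInf {ε : ℝ | 0 < ε ∧ C ε < c}) * c ^ (a / b))
        atTop (𝓝 (Chat ^ (a / b) * Ehat)) :=
  stmt0_general E C a b Ehat Chat hb hChat hE hC
end

section
/- Let E_A, C_A, E_B, C_B : (0,∞) → [0,∞) be functions, let a, b > 0 and let Ê_A, Ĉ_A, Ê_B, Ĉ_B ∈ (0,∞) be such that ε^{-a} E_A(ε) → Ê_A, ε^{b} C_A(ε) → Ĉ_A, ε^{-a} E_B(ε) → Ê_B and ε^{b} C_B(ε) → Ĉ_B as ε → 0⁺. For c > 0 large enough set ε_A(c) = inf{ε > 0 : C_A(ε) < c}, Ē_A(c) = E_A(ε_A(c)), and similarly for B. If Ĉ_A^{a/b} · Ê_A ≤ Ĉ_B^{a/b} · Ê_B, then limsup_{c → ∞} Ē_A(c)/Ē_B(c) ≤ 1, i.e. the rule A asymptotically dominates the rule B. -/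
open Filter Topology Set

lemma inf_asymp (C : ℝ → ℝ) (b K : ℝ) (hb : 0 < b) (hK : 0 < K)
    (hC : Tendsto (fun ε : ℝ => ε ^ b * C ε) (𝓝[>] 0) (𝓝 K)) :
    Tendsto (fun c : ℝ => c ^ (1/b) * sInf {ε : ℝ | 0 < ε ∧ C ε < c}) atTop
      (𝓝 (K ^ (1/b))) := by
  have hbddS : ∀ c : ℝ, BddBelow {ε : ℝ | 0 < ε ∧ C ε < c} :=
    fun c => ⟨0, fun ε hε => hε.1.le⟩
  have hrpb : ∀ x : ℝ, 0 ≤ x → (x ^ (1/b)) ^ b = x := fun x hx => by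
    rw [← Real.rpow_mul hx, one_div_mul_cancel hb.ne', Real.rpow_one]
  have hrbp : ∀ x : ℝ, 0 ≤ x → (x ^ b) ^ (1/b) = x := fun x hx => by
    rw [← Real.rpow_mul hx, mul_one_div_cancel hb.ne', Real.rpow_one]
  -- upper membership fact
  have key_up : ∀ D : ℝ, K < D →
      ∀ᶠ c in atTop, (D/c) ^ (1/b) ∈ {ε : ℝ | 0 < ε ∧ C ε < c} := by
    intro D hKD
    have hD : 0 < D := hK.trans hKD
    have hev : ∀ᶠ ε in 𝓝[>] (0:ℝ), ε ^ b * C ε < D :=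
      hC.eventually (eventually_lt_nhds hKD)
    rw [eventually_nhdsWithin_iff, Metric.eventually_nhds_iff] at hev
    obtain ⟨δ, hδ, hδp⟩ := hev
    filter_upwards [eventually_gt_atTop (max 0 (D / δ ^ b))] with c hc
    have hc0 : 0 < c := lt_of_le_of_lt (le_max_left _ _) hc
    have hDc : 0 < D / c := div_pos hD hc0
    set x := (D/c) ^ (1/b) with hx
    have hx0 : 0 < x := Real.rpow_pos_of_pos hDc _
    have hxb : x ^ b = D / c := hrpb _ hDc.le
    have hxδ : x < δ := by
      have h1 : D / c < δ ^ b := by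
        rw [div_lt_iff₀ hc0]
        have h2 : D / δ ^ b < c := lt_of_le_of_lt (le_max_right _ _) hc
        calc D = (D / δ ^ b) * δ ^ b := by
                field_simp
          _ < c * δ ^ b := by
                exact mul_lt_mul_of_pos_right h2 (Real.rpow_pos_of_pos hδ _)
          _ = δ ^ b * c := mul_comm _ _
      calc x < (δ ^ b) ^ (1/b) := Real.rpow_lt_rpow hDc.le h1 (by positivity)
        _ = δ := hrbp _ hδ.le
    have hmem : x ∈ Metric.ball (0:ℝ) δ := by
      simp [abs_of_pos hx0, hxδ, Real.dist_eq]
    have hCx : x ^ b * C x < D := hδp (by simpa [Real.dist_eq, abs_of_pos hx0] using hxδ) hx0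
    refine ⟨hx0, ?_⟩
    rw [hxb] at hCx
    -- (D/c) * C x < D  and D/c > 0 so C x < c
    have h3 : C x < D / (D / c) := (lt_div_iff₀ hDc).2 (by rwa [mul_comm] at hCx)
    calc C x < D / (D / c) := h3
      _ = c := by field_simp
  -- lower bound fact
  have key_low : ∀ D : ℝ, 0 < D → D < K →
      ∀ᶠ c in atTop, ∀ ε ∈ {ε : ℝ | 0 < ε ∧ C ε < c}, (D/c) ^ (1/b) ≤ ε := by
    intro D hD hDK
    have hev : ∀ᶠ ε in 𝓝[>] (0:ℝ), D < ε ^ b * C ε :=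
      hC.eventually (eventually_gt_nhds hDK)
    rw [eventually_nhdsWithin_iff, Metric.eventually_nhds_iff] at hev
    obtain ⟨δ, hδ, hδp⟩ := hev
    filter_upwards [eventually_gt_atTop (max 0 (D / δ ^ b))] with c hc
    have hc0 : 0 < c := lt_of_le_of_lt (le_max_left _ _) hc
    have hDc : 0 < D / c := div_pos hD hc0
    intro ε hε
    by_contra hlt
    push_neg at hlt
    have hε0 : 0 < ε := hε.1
    have hεδ : ε < δ := by
      have h1 : D / c < δ ^ b := by
        rw [div_lt_iff₀ hc0]
        have h2 : D / δ ^ b < c := lt_of_le_of_lt (le_max_right _ _) hc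
        calc D = (D / δ ^ b) * δ ^ b := by field_simp
          _ < c * δ ^ b := mul_lt_mul_of_pos_right h2 (Real.rpow_pos_of_pos hδ _)
          _ = δ ^ b * c := mul_comm _ _
      calc ε < (D/c) ^ (1/b) := hlt
        _ < (δ ^ b) ^ (1/b) := Real.rpow_lt_rpow hDc.le h1 (by positivity)
        _ = δ := hrbp _ hδ.le
    have hgt : D < ε ^ b * C ε :=
      hδp (by simpa [Real.dist_eq, abs_of_pos hε0] using hεδ) hε0
    have hεb : ε ^ b < D / c := by
      calc ε ^ b < ((D/c) ^ (1/b)) ^ b :=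
            Real.rpow_lt_rpow hε0.le hlt hb
        _ = D / c := hrpb _ hDc.le
    have : ε ^ b * C ε < D := by
      calc ε ^ b * C ε ≤ ε ^ b * c := by
            rcases le_or_gt (C ε) c with h | h
            · exact mul_le_mul_of_nonneg_left h (Real.rpow_pos_of_pos hε0 _).le
            · exact absurd hε.2 (not_lt.2 h.le)
        _ < (D / c) * c := mul_lt_mul_of_pos_right hεb hc0
        _ = D := by field_simp
    linarith
  -- now the order-characterized limit
  rw [tendsto_order]
  constructor
  · intro y hy
    rcases lt_or_ge y 0 with hy0 | hy0
    · filter_upwards [eventually_gt_atTop 0] with c hc0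
      have h1 : 0 ≤ sInf {ε : ℝ | 0 < ε ∧ C ε < c} :=
        Real.sInf_nonneg (fun ε hε => hε.1.le)
      have h2 : (0:ℝ) ≤ c ^ (1/b) := (Real.rpow_pos_of_pos hc0 _).le
      nlinarith
    · have hyb : y ^ b < K := by
        calc y ^ b < (K ^ (1/b)) ^ b := Real.rpow_lt_rpow hy0 hy hb
          _ = K := hrpb _ hK.le
      set D := (y ^ b + K) / 2 with hD
      have hDpos : 0 < D := by
        have : (0:ℝ) ≤ y ^ b := Real.rpow_nonneg hy0 _
        positivity
      have hDK : D < K := by simp only [hD]; linarith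
      have hyD : y < D ^ (1/b) := by
        have h1 : y ^ b < D := by simp only [hD]; linarith
        calc y = (y ^ b) ^ (1/b) := (hrbp _ hy0).symm
          _ < D ^ (1/b) := Real.rpow_lt_rpow (Real.rpow_nonneg hy0 _) h1 (by positivity)
      filter_upwards [key_low D hDpos hDK, key_up (K+1) (by linarith),
        eventually_gt_atTop 0] with c hlow hup hc0
      have hne : {ε : ℝ | 0 < ε ∧ C ε < c}.Nonempty := ⟨_, hup⟩
      have hInf : (D/c) ^ (1/b) ≤ sInf {ε : ℝ | 0 < ε ∧ C ε < c} :=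
        le_csInf hne hlow
      have hcalc : c ^ (1/b) * (D/c) ^ (1/b) = D ^ (1/b) := by
        rw [← Real.mul_rpow hc0.le (div_pos hDpos hc0).le, mul_div_cancel₀ _ hc0.ne']
      calc y < D ^ (1/b) := hyD
        _ = c ^ (1/b) * (D/c) ^ (1/b) := hcalc.symm
        _ ≤ c ^ (1/b) * sInf {ε : ℝ | 0 < ε ∧ C ε < c} :=
            mul_le_mul_of_nonneg_left hInf (Real.rpow_pos_of_pos hc0 _).le
  · intro y hy
    have hy0 : 0 < y := (Real.rpow_pos_of_pos hK _).trans hy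
    have hKyb : K < y ^ b := by
      calc K = (K ^ (1/b)) ^ b := (hrpb _ hK.le).symm
        _ < y ^ b := Real.rpow_lt_rpow (Real.rpow_nonneg hK.le _) hy hb
    set D := (K + y ^ b) / 2 with hD
    have hKD : K < D := by simp only [hD]; linarith
    have hDy : D ^ (1/b) < y := by
      have h1 : D < y ^ b := by simp only [hD]; linarith
      calc D ^ (1/b) < (y ^ b) ^ (1/b) :=
            Real.rpow_lt_rpow (hK.trans hKD).le h1 (by positivity)
        _ = y := hrbp _ hy0.le
    filter_upwards [key_up D hKD, eventually_gt_atTop 0] with c hup hc0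
    have hInf : sInf {ε : ℝ | 0 < ε ∧ C ε < c} ≤ (D/c) ^ (1/b) :=
      csInf_le (hbddS c) hup
    have hcalc : c ^ (1/b) * (D/c) ^ (1/b) = D ^ (1/b) := by
      rw [← Real.mul_rpow hc0.le (div_pos (hK.trans hKD) hc0).le,
        mul_div_cancel₀ _ hc0.ne']
    calc c ^ (1/b) * sInf {ε : ℝ | 0 < ε ∧ C ε < c}
        ≤ c ^ (1/b) * (D/c) ^ (1/b) :=
          mul_le_mul_of_nonneg_left hInf (Real.rpow_pos_of_pos hc0 _).le
      _ = D ^ (1/b) := hcalc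
      _ < y := hDy

/-- If two discretization rules `A` and `B` have error and cost functionals
with power-law asymptotics `ε^{-a} E(ε) → Ê`, `ε^{b} C(ε) → Ĉ` near `0⁺`, and the
asymptotic constant `Ĉ_A^{a/b} Ê_A` of rule `A` is at most that of rule `B`, then rule `A`
asymptotically dominates rule `B`: `limsup_{c→∞} Ē_A(c)/Ē_B(c) ≤ 1`, where
`Ē(c) = E (inf {ε > 0 : C ε < c})`. -/
theorem stmt1 (EA CA EB CB : ℝ → ℝ) (a b EhatA ChatA EhatB ChatB : ℝ)
    (ha : 0 < a) (hb : 0 < b)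
    (hEhatA : 0 < EhatA) (hChatA : 0 < ChatA) (hEhatB : 0 < EhatB) (hChatB : 0 < ChatB)
    (hEAnn : ∀ ε : ℝ, 0 < ε → 0 ≤ EA ε) (hCAnn : ∀ ε : ℝ, 0 < ε → 0 ≤ CA ε)
    (hEBnn : ∀ ε : ℝ, 0 < ε → 0 ≤ EB ε) (hCBnn : ∀ ε : ℝ, 0 < ε → 0 ≤ CB ε)
    (hEA : Tendsto (fun ε : ℝ => ε ^ (-a) * EA ε) (𝓝[>] 0) (𝓝 EhatA))
    (hCA : Tendsto (fun ε : ℝ => ε ^ b * CA ε) (𝓝[>] 0) (𝓝 ChatA))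
    (hEB : Tendsto (fun ε : ℝ => ε ^ (-a) * EB ε) (𝓝[>] 0) (𝓝 EhatB))
    (hCB : Tendsto (fun ε : ℝ => ε ^ b * CB ε) (𝓝[>] 0) (𝓝 ChatB))
    (hle : ChatA ^ (a / b) * EhatA ≤ ChatB ^ (a / b) * EhatB) :
    Filter.limsup (fun c : ℝ =>
        EA (sInf {ε : ℝ | 0 < ε ∧ CA ε < c}) / EB (sInf {ε : ℝ | 0 < ε ∧ CB ε < c}))
      atTop ≤ 1 := by
  set eA : ℝ → ℝ := fun c => sInf {ε : ℝ | 0 < ε ∧ CA ε < c} with heAdef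
  set eB : ℝ → ℝ := fun c => sInf {ε : ℝ | 0 < ε ∧ CB ε < c} with heBdef
  have hgA := inf_asymp CA b ChatA hb hChatA hCA
  have hgB := inf_asymp CB b ChatB hb hChatB hCB
  have hcpow : Tendsto (fun c : ℝ => c ^ (1/b)) atTop atTop :=
    tendsto_rpow_atTop (by positivity)
  -- eventual positivity of eA, eB
  have hCApos : (0:ℝ) < ChatA ^ (1/b) := Real.rpow_pos_of_pos hChatA _
  have hCBpos : (0:ℝ) < ChatB ^ (1/b) := Real.rpow_pos_of_pos hChatB _
  have heApos : ∀ᶠ c in atTop, 0 < eA c := by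
    filter_upwards [hgA.eventually (eventually_gt_nhds (half_lt_self hCApos)),
      eventually_gt_atTop 0] with c h1 h2
    have hcp : (0:ℝ) < c ^ (1/b) := Real.rpow_pos_of_pos h2 _
    nlinarith [half_pos hCApos]
  have heBpos : ∀ᶠ c in atTop, 0 < eB c := by
    filter_upwards [hgB.eventually (eventually_gt_nhds (half_lt_self hCBpos)),
      eventually_gt_atTop 0] with c h1 h2
    have hcp : (0:ℝ) < c ^ (1/b) := Real.rpow_pos_of_pos h2 _
    nlinarith [half_pos hCBpos]
  -- eA → 0 within (0,∞)
  have heA0 : Tendsto eA atTop (𝓝 0) := by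
    have h1 : Tendsto (fun c : ℝ => (c ^ (1/b) * eA c) / c ^ (1/b)) atTop (𝓝 0) :=
      hgA.div_atTop hcpow
    refine h1.congr' ?_
    filter_upwards [eventually_gt_atTop 0] with c hc
    exact mul_div_cancel_left₀ _ (Real.rpow_pos_of_pos hc (1/b)).ne'
  have heB0 : Tendsto eB atTop (𝓝 0) := by
    have h1 : Tendsto (fun c : ℝ => (c ^ (1/b) * eB c) / c ^ (1/b)) atTop (𝓝 0) :=
      hgB.div_atTop hcpow
    refine h1.congr' ?_
    filter_upwards [eventually_gt_atTop 0] with c hc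
    exact mul_div_cancel_left₀ _ (Real.rpow_pos_of_pos hc (1/b)).ne'
  have heA : Tendsto eA atTop (𝓝[>] 0) :=
    tendsto_nhdsWithin_iff.2 ⟨heA0, heApos⟩
  have heB : Tendsto eB atTop (𝓝[>] 0) :=
    tendsto_nhdsWithin_iff.2 ⟨heB0, heBpos⟩
  have hFA : Tendsto (fun c => (eA c) ^ (-a) * EA (eA c)) atTop (𝓝 EhatA) :=
    hEA.comp heA
  have hFB : Tendsto (fun c => (eB c) ^ (-a) * EB (eB c)) atTop (𝓝 EhatB) :=
    hEB.comp heB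
  -- ratio eA/eB
  have hrat : Tendsto (fun c => eA c / eB c) atTop (𝓝 (ChatA ^ (1/b) / ChatB ^ (1/b))) := by
    have h1 := hgA.div hgB hCBpos.ne'
    refine h1.congr' ?_
    filter_upwards [eventually_gt_atTop 0] with c hc
    simp only [Pi.div_apply]
    exact mul_div_mul_left _ _ (Real.rpow_pos_of_pos hc (1/b)).ne'
  have hpow : Tendsto (fun c => (eA c / eB c) ^ a) atTop
      (𝓝 ((ChatA ^ (1/b) / ChatB ^ (1/b)) ^ a)) := by
    have hcont : ContinuousAt (fun x : ℝ => x ^ a) (ChatA ^ (1/b) / ChatB ^ (1/b)) :=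
      Real.continuousAt_rpow_const _ _ (Or.inr ha.le)
    exact hcont.tendsto.comp hrat
  set L : ℝ := EhatA * (ChatA ^ (1/b) / ChatB ^ (1/b)) ^ a / EhatB with hLdef
  have hmain : Tendsto (fun c : ℝ => EA (eA c) / EB (eB c)) atTop (𝓝 L) := by
    have hT : Tendsto
        (fun c => ((eA c) ^ (-a) * EA (eA c)) * (eA c / eB c) ^ a /
          ((eB c) ^ (-a) * EB (eB c))) atTop (𝓝 L) :=
      (hFA.mul hpow).div hFB hEhatB.ne'
    refine hT.congr' ?_
    filter_upwards [heApos, heBpos] with c hxA hxB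
    set x := eA c
    set y := eB c
    have hXA : (x : ℝ) ^ a ≠ 0 := (Real.rpow_pos_of_pos hxA _).ne'
    have hYA : (y : ℝ) ^ a ≠ 0 := (Real.rpow_pos_of_pos hxB _).ne'
    rw [Real.div_rpow hxA.le hxB.le, Real.rpow_neg hxA.le, Real.rpow_neg hxB.le]
    rw [div_eq_mul_inv _ ((y^a)⁻¹ * EB y), mul_inv, inv_inv, div_eq_mul_inv (EA x)]
    have hkey : (x ^ a)⁻¹ * EA x * (x ^ a / y ^ a) * (y ^ a * (EB y)⁻¹)
        = ((x ^ a)⁻¹ * x ^ a) * (((y ^ a)⁻¹) * y ^ a) * (EA x * (EB y)⁻¹) := by ring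
    rw [hkey, inv_mul_cancel₀ hXA, inv_mul_cancel₀ hYA, one_mul, one_mul]
  rw [hmain.limsup_eq]
  -- L ≤ 1
  have hQ : (ChatA ^ (1/b) / ChatB ^ (1/b)) ^ a = ChatA ^ (a/b) / ChatB ^ (a/b) := by
    rw [Real.div_rpow (Real.rpow_nonneg hChatA.le _) (Real.rpow_nonneg hChatB.le _),
      ← Real.rpow_mul hChatA.le, ← Real.rpow_mul hChatB.le,
      show (1/b) * a = a/b by ring]
  have hCBab : (0:ℝ) < ChatB ^ (a/b) := Real.rpow_pos_of_pos hChatB _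
  rw [hLdef, hQ, div_le_one hEhatB]
  rw [show EhatA * (ChatA ^ (a/b) / ChatB ^ (a/b)) = EhatA * ChatA ^ (a/b) / ChatB ^ (a/b)
      by ring, div_le_iff₀ hCBab]
  nlinarith [hle]
end

section
/- Let ν be a measure on (0,∞) such that ν((x,∞)) < ∞ for every x > 0, let K : (0,∞) → [0,∞) be measurable with ∫_{(0,∞)} (√(K) − 1)² dν < ∞, and let α > 0 and c ≥ 0. If lim_{x → 0⁺} x^α ∫_{(x,∞)} K dν = c, then lim_{x → 0⁺} x^α ν((x,∞)) = c. -/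
open MeasureTheory Filter Topology Set

/-!
Write `A x = ∫_{(x,∞)} K dν` and `B x = ν((x,∞))`. On the finite measure `ν|_{(x,∞)}` the
functions `√K` and `1` lie in `L²` with norms `√(A x)` and `√(B x)`, so the reverse triangle
inequality gives `|√(A x) - √(B x)| ≤ ‖√K - 1‖₂ ≤ √D` with `D = ∫_{(0,∞)} (√K - 1)² dν`.
Multiplying by `x^{α/2} → 0` shows that `√(x^α A x)` and `√(x^α B x)` have the same limit `√c`.
-/

section L2

variable {Ω : Type*} [MeasurableSpace Ω] {μ : Measure Ω}

lemma norm_toLp_two_eq_sqrt_integral_sq {g : Ω → ℝ} (hg : MemLp g 2 μ) :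
    ‖hg.toLp g‖ = √(∫ ω, g ω ^ 2 ∂μ) := by
  rw [Lp.norm_toLp, hg.eLpNorm_eq_integral_rpow_norm two_ne_zero ENNReal.ofNat_ne_top,
    ENNReal.toReal_ofReal (by positivity), Real.sqrt_eq_rpow]
  simp [Real.norm_eq_abs, sq_abs]

lemma abs_sqrt_integral_sub_sqrt_measureReal_le [IsFiniteMeasure μ] {f : Ω → ℝ}
    (hf : 0 ≤ᵐ[μ] f) (hs : MemLp (fun ω => √(f ω) - 1) 2 μ) :
    |√(∫ ω, f ω ∂μ) - √(μ.real univ)| ≤ √(∫ ω, (√(f ω) - 1) ^ 2 ∂μ) := by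
  have h1 : MemLp (fun _ => (1 : ℝ)) 2 μ := memLp_const 1
  have hsqrt : MemLp (fun ω => √(f ω)) 2 μ := by
    convert hs.add h1 using 1
    ext ω
    simp
  have hsub := abs_norm_sub_norm_le (hsqrt.toLp _) (h1.toLp _)
  rw [← MemLp.toLp_sub, norm_toLp_two_eq_sqrt_integral_sq, norm_toLp_two_eq_sqrt_integral_sq,
    norm_toLp_two_eq_sqrt_integral_sq] at hsub
  have hsq : ∫ ω, √(f ω) ^ 2 ∂μ = ∫ ω, f ω ∂μ :=
    integral_congr_ae (hf.mono fun ω hω => Real.sq_sqrt hω)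
  simpa [hsq] using hsub

lemma abs_sqrt_setIntegral_sub_sqrt_measure_le {ν : Measure Ω} {K : Ω → ℝ} {s t : Set Ω}
    (hst : s ⊆ t) (hνs : ν s ≠ ⊤) (hKmeas : Measurable K) (hKnn : ∀ ω, 0 ≤ K ω)
    (hI : IntegrableOn (fun ω => (√(K ω) - 1) ^ 2) t ν) :
    |√(∫ ω in s, K ω ∂ν) - √((ν s).toReal)| ≤ √(∫ ω in t, (√(K ω) - 1) ^ 2 ∂ν) := by
  have : IsFiniteMeasure (ν.restrict s) := isFiniteMeasure_restrict.2 hνs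
  have hL2 : MemLp (fun ω => √(K ω) - 1) 2 (ν.restrict s) :=
    (memLp_two_iff_integrable_sq (hKmeas.sqrt.sub_const 1).aestronglyMeasurable).2
      (hI.mono_set hst)
  have hmono : ∫ ω in s, (√(K ω) - 1) ^ 2 ∂ν ≤ ∫ ω in t, (√(K ω) - 1) ^ 2 ∂ν :=
    setIntegral_mono_set hI (ae_of_all _ fun _ => sq_nonneg _) hst.eventuallyLE
  have h := abs_sqrt_integral_sub_sqrt_measureReal_le (ae_of_all _ hKnn) hL2
  rw [measureReal_restrict_apply_univ] at h
  exact h.trans (Real.sqrt_le_sqrt hmono)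

end L2

lemma tendsto_of_abs_sqrt_sub_le {ι : Type*} {l : Filter ι} {a b w : ι → ℝ} {c : ℝ}
    (hc : 0 ≤ c) (ha : Tendsto a l (𝓝 c)) (hb : ∀ᶠ i in l, 0 ≤ b i)
    (hw : Tendsto w l (𝓝 0)) (hab : ∀ᶠ i in l, |√(b i) - √(a i)| ≤ w i) :
    Tendsto b l (𝓝 c) := by
  have hdiff : Tendsto (fun i => √(b i) - √(a i)) l (𝓝 0) :=
    squeeze_zero_norm' (by simpa only [Real.norm_eq_abs] using hab) hw
  have hsqrt : Tendsto (fun i => √(b i)) l (𝓝 √c) := by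
    simpa using hdiff.add ha.sqrt
  have hsq := hsqrt.pow 2
  rw [Real.sq_sqrt hc] at hsq
  exact hsq.congr' (hb.mono fun i hi => Real.sq_sqrt hi)

/-- let `ν` be a measure (on `(0,∞)`) whose tails `ν((x,∞))` are finite for
every `x > 0`, and let `K ≥ 0` be measurable with finite Hellinger-type discrepancy
`∫_{(0,∞)} (√K − 1)² dν < ∞`. If `x^α ∫_{(x,∞)} K dν → c` as `x → 0⁺`, then
`x^α ν((x,∞)) → c` as `x → 0⁺`. -/
theorem stmt4 (ν : Measure ℝ) (K : ℝ → ℝ) (α c : ℝ) (hα : 0 < α) (hc : 0 ≤ c)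
    (hνfin : ∀ x : ℝ, 0 < x → ν (Ioi x) < ⊤)
    (hKmeas : Measurable K) (hKnn : ∀ x, 0 ≤ K x)
    (hI : IntegrableOn (fun x => (Real.sqrt (K x) - 1) ^ 2) (Ioi 0) ν)
    (hlim : Tendsto (fun x : ℝ => x ^ α * ∫ z in Ioi x, K z ∂ν) (𝓝[>] 0) (𝓝 c)) :
    Tendsto (fun x : ℝ => x ^ α * (ν (Ioi x)).toReal) (𝓝[>] 0) (𝓝 c) := by
  set D := ∫ z in Ioi 0, (√(K z) - 1) ^ 2 ∂ν
  have htail (x : ℝ) (hx : 0 < x) : |√((ν (Ioi x)).toReal) - √(∫ z in Ioi x, K z ∂ν)| ≤ √D := by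
    rw [abs_sub_comm]
    exact abs_sqrt_setIntegral_sub_sqrt_measure_le (Ioi_subset_Ioi hx.le) (hνfin x hx).ne
      hKmeas hKnn hI
  have hpow : Tendsto (fun x : ℝ => x ^ α) (𝓝[>] 0) (𝓝 0) := by
    simpa [Real.zero_rpow hα.ne'] using
      (Real.continuousAt_rpow_const 0 α (Or.inr hα.le)).tendsto.mono_left nhdsWithin_le_nhds
  refine tendsto_of_abs_sqrt_sub_le hc hlim ?_ (by simpa using (hpow.mul_const D).sqrt) ?_
  · filter_upwards [self_mem_nhdsWithin] with x (hx : 0 < x)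
    exact mul_nonneg (Real.rpow_nonneg hx.le α) ENNReal.toReal_nonneg
  · filter_upwards [self_mem_nhdsWithin] with x (hx : 0 < x)
    have hxα := Real.rpow_nonneg hx.le α
    rw [Real.sqrt_mul hxα, Real.sqrt_mul hxα, Real.sqrt_mul hxα, ← mul_sub, abs_mul,
      abs_of_nonneg (Real.sqrt_nonneg _)]
    exact mul_le_mul_of_nonneg_left (htail x hx) (Real.sqrt_nonneg _)
end

section
/- Let α ∈ (1,2), let c₊, c₋ ≥ 0, let η > 0, and let ν be a measure on ℝ with ν({0}) = 0 such that ν((x,∞)) < ∞ and ν((−∞,−x)) < ∞ for every x > 0, and such that x^α ν((x,∞)) → c₊ and x^α ν((−∞,−x)) → c₋ as x → 0⁺. Then lim_{ε → 0⁺} ε^{α−1} ( ∫_{(−η,−ε]} (−ε − x) ν(dx) + ∫_{[ε,η)} (ε − x) ν(dx) ) = (c₋ − c₊)/(α − 1). -/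
open MeasureTheory Filter Topology Set
open scoped ENNReal

/-!
With `F t = ν((t, η))`, the layer-cake formula turns `∫_{[ε,η)} (x - ε) dν` into `∫_ε^η F`, and
`t^α F t → c₊` because `ν([η, ∞))` is finite. Writing `F t = c₊ t^(-α) + r t` with
`t^α r t → 0`, the main term contributes exactly `c₊ (1 - (ε/η)^(α-1)) / (α - 1)` after scaling by
`ε^(α-1)`, while the remainder contributes at most `δ / (α - 1)` from `(ε, d)`, where
`|r t| ≤ δ t^(-α)`, plus `O(ε^(α-1))` from `(d, η)`. The negative half-line is the same statement
for the image of `ν` under `x ↦ -x`.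
-/

theorem tendsto_rpow_nhdsGT_zero {β : ℝ} (hβ : 0 < β) :
    Tendsto (fun x : ℝ => x ^ β) (𝓝[>] 0) (𝓝 0) := by
  simpa [Real.zero_rpow hβ.ne'] using
    ((Real.continuousAt_rpow_const 0 β (Or.inr hβ.le)).tendsto).mono_left nhdsWithin_le_nhds

theorem rpow_sub_one_mul_integral_rpow_neg {α ε η : ℝ} (hα : α ≠ 1) (hε : 0 < ε) (hη : 0 < η) :
    ε ^ (α - 1) * ∫ t in ε..η, t ^ (-α) = (1 - ε ^ (α - 1) * η ^ (1 - α)) / (α - 1) := by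
  have hcancel : ε ^ (α - 1) * ε ^ (1 - α) = 1 := by
    rw [← Real.rpow_add hε]; simp
  rw [integral_rpow (Or.inr ⟨by contrapose! hα; linarith, notMem_uIcc_of_lt hε hη⟩),
    show -α + 1 = 1 - α by ring]
  field_simp
  linear_combination (-(α - 1)) * hcancel

theorem tendsto_rpow_sub_one_mul_integral_rpow_neg {α η : ℝ} (hα : 1 < α) (hη : 0 < η) :
    Tendsto (fun ε => ε ^ (α - 1) * ∫ t in ε..η, t ^ (-α)) (𝓝[>] 0) (𝓝 (1 / (α - 1))) := by
  have hlim : Tendsto (fun ε : ℝ => (1 - ε ^ (α - 1) * η ^ (1 - α)) / (α - 1)) (𝓝[>] 0)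
      (𝓝 ((1 - 0 * η ^ (1 - α)) / (α - 1))) :=
    ((tendsto_rpow_nhdsGT_zero (sub_pos.2 hα)).mul_const _).const_sub 1 |>.div_const _
  rw [zero_mul, sub_zero] at hlim
  refine hlim.congr' ?_
  filter_upwards [self_mem_nhdsWithin] with ε hε
  exact (rpow_sub_one_mul_integral_rpow_neg hα.ne' hε hη).symm

theorem tendsto_rpow_sub_one_mul_integral_of_tendsto_rpow_mul_zero {α η : ℝ} {r : ℝ → ℝ}
    (hα : 1 < α) (hη : 0 < η) (hint : ∀ ε > 0, IntervalIntegrable r volume ε η)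
    (hr : Tendsto (fun t => t ^ α * r t) (𝓝[>] 0) (𝓝 0)) :
    Tendsto (fun ε => ε ^ (α - 1) * ∫ t in ε..η, r t) (𝓝[>] 0) (𝓝 0) := by
  have hα' : 0 < α - 1 := sub_pos.2 hα
  rw [Metric.tendsto_nhds]
  intro e he
  obtain ⟨δ, hδ : 0 < δ, hsmall⟩ := (mem_nhdsGT_iff_exists_Ioo_subset.1 <|
    (Metric.tendsto_nhds.1 hr) (e * (α - 1) / 2) (by positivity))
  set d := min (δ / 2) η
  have hd : 0 < d := lt_min (half_pos hδ) hη
  have hbound : ∀ t ∈ Ioc 0 d, ‖r t‖ ≤ e * (α - 1) / 2 * t ^ (-α) := by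
    rintro t ⟨ht, htd⟩
    have hlt : |t ^ α * r t| < e * (α - 1) / 2 := by
      simpa using hsmall ⟨ht, by linarith [min_le_left (δ / 2) η]⟩
    have hrt : r t = t ^ (-α) * (t ^ α * r t) := by
      rw [← mul_assoc, ← Real.rpow_add ht]; simp
    rw [hrt, norm_mul, Real.norm_of_nonneg (by positivity), mul_comm]
    exact mul_le_mul_of_nonneg_right hlt.le (by positivity)
  have htail : Tendsto (fun ε : ℝ => ε ^ (α - 1) * ∫ t in d..η, r t) (𝓝[>] 0) (𝓝 0) := by
    simpa using (tendsto_rpow_nhdsGT_zero hα').mul_const (∫ t in d..η, r t)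
  filter_upwards [Metric.tendsto_nhds.1 htail (e / 2) (by positivity),
    Ioo_mem_nhdsGT hd] with ε hεtail ⟨hε, hεd⟩
  have hhead : ‖ε ^ (α - 1) * ∫ t in ε..d, r t‖ ≤ e / 2 := by
    have hrpow : IntervalIntegrable (fun t : ℝ => t ^ (-α)) volume ε d :=
      intervalIntegral.intervalIntegrable_rpow (Or.inr (notMem_uIcc_of_lt hε hd))
    calc ‖ε ^ (α - 1) * ∫ t in ε..d, r t‖
        ≤ ε ^ (α - 1) * ∫ t in ε..d, e * (α - 1) / 2 * t ^ (-α) := by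
          rw [norm_mul, Real.norm_of_nonneg (by positivity)]
          refine mul_le_mul_of_nonneg_left ?_ (by positivity)
          refine intervalIntegral.norm_integral_le_of_norm_le hεd.le
            (ae_of_all _ fun t ht => hbound t ⟨hε.trans ht.1, ht.2⟩) (hrpow.const_mul _)
      _ = e / 2 * (1 - ε ^ (α - 1) * d ^ (1 - α)) := by
          rw [intervalIntegral.integral_const_mul, mul_left_comm,
            rpow_sub_one_mul_integral_rpow_neg hα.ne' hε hd]
          field_simp
      _ ≤ e / 2 := mul_le_of_le_one_right (by positivity) (sub_le_self _ (by positivity))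
  have hsplit : ∫ t in ε..η, r t = (∫ t in ε..d, r t) + ∫ t in d..η, r t :=
    (intervalIntegral.integral_add_adjacent_intervals
      ((hint ε hε).mono_set (uIcc_subset_uIcc_left (mem_uIcc_of_le hεd.le (min_le_right _ _))))
      (hint d hd)).symm
  rw [dist_zero_right] at hεtail ⊢
  rw [hsplit, mul_add]
  linarith [norm_add_le (ε ^ (α - 1) * ∫ t in ε..d, r t) (ε ^ (α - 1) * ∫ t in d..η, r t)]

theorem tendsto_rpow_sub_one_mul_integral_of_tendsto_rpow_mul {α η c : ℝ} {G : ℝ → ℝ}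
    (hα : 1 < α) (hη : 0 < η) (hint : ∀ ε > 0, IntervalIntegrable G volume ε η)
    (hG : Tendsto (fun t => t ^ α * G t) (𝓝[>] 0) (𝓝 c)) :
    Tendsto (fun ε => ε ^ (α - 1) * ∫ t in ε..η, G t) (𝓝[>] 0) (𝓝 (c / (α - 1))) := by
  have hrpow : ∀ ε > 0, IntervalIntegrable (fun t : ℝ => c * t ^ (-α)) volume ε η :=
    fun ε hε => (intervalIntegral.intervalIntegrable_rpow
      (Or.inr (notMem_uIcc_of_lt hε hη))).const_mul c
  have hrem : Tendsto (fun t => t ^ α * (G t - c * t ^ (-α))) (𝓝[>] 0) (𝓝 0) := by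
    refine (sub_self c ▸ hG.sub_const c).congr' ?_
    filter_upwards [self_mem_nhdsWithin] with t (ht : 0 < t)
    rw [mul_sub, mul_left_comm, ← Real.rpow_add ht]
    simp
  have hlim := ((tendsto_rpow_sub_one_mul_integral_rpow_neg hα hη).const_mul c).add
    (tendsto_rpow_sub_one_mul_integral_of_tendsto_rpow_mul_zero hα hη
      (fun ε hε => (hint ε hε).sub (hrpow ε hε)) hrem)
  rw [mul_one_div, add_zero] at hlim
  refine hlim.congr' ?_
  filter_upwards [self_mem_nhdsWithin] with ε (hε : 0 < ε)
  rw [intervalIntegral.integral_sub (hint ε hε) (hrpow ε hε), intervalIntegral.integral_const_mul]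
  ring

theorem setIntegral_Ico_sub_eq_intervalIntegral_measureReal_Ioo {μ : Measure ℝ} {a b : ℝ}
    (hab : a ≤ b) (hfin : μ (Ico a b) ≠ ∞) :
    ∫ x in Ico a b, (x - a) ∂μ = ∫ t in a..b, μ.real (Ioo t b) := by
  have hint : Integrable (fun x => x - a) (μ.restrict (Ico a b)) := by
    refine Measure.integrableOn_of_bounded hfin (by fun_prop) (M := b - a) ?_
    refine ae_restrict_of_forall_mem measurableSet_Ico fun x hx => ?_
    rw [Real.norm_of_nonneg (sub_nonneg.2 hx.1)]
    linarith [hx.2]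
  have hnn : 0 ≤ᵐ[μ.restrict (Ico a b)] fun x => x - a :=
    ae_restrict_of_forall_mem measurableSet_Ico fun x hx => sub_nonneg.2 hx.1
  have hlevel : ∀ t, 0 < t → (μ.restrict (Ico a b)).real {x | t < x - a}
      = μ.real (Ioo (t + a) b) := by
    intro t ht
    rw [measureReal_restrict_apply' measurableSet_Ico]
    congr 1
    ext x
    simp only [mem_inter_iff, mem_ofPred_eq, mem_Ico, mem_Ioo]
    constructor
    · rintro ⟨htx, -, hxb⟩
      exact ⟨by linarith, hxb⟩
    · rintro ⟨htx, hxb⟩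
      exact ⟨by linarith, by linarith, hxb⟩
  rw [hint.integral_eq_integral_meas_lt hnn, setIntegral_congr_fun measurableSet_Ioi hlevel,
    setIntegral_eq_of_subset_of_forall_sdiff_eq_zero measurableSet_Ioi Ioc_subset_Ioi_self
      (s := Ioc 0 (b - a)), ← intervalIntegral.integral_of_le (sub_nonneg.2 hab),
    intervalIntegral.integral_comp_add_right (fun t => μ.real (Ioo t b)) a]
  · rw [zero_add, sub_add_cancel]
  · rintro t ⟨ht, ht'⟩
    have hbt : b ≤ t + a := by
      simp only [mem_Ioc, not_and, not_le] at ht'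
      linarith [ht' ht]
    rw [Ioo_eq_empty (not_lt.2 hbt), measureReal_empty]

theorem tendsto_rpow_mul_measureReal_Ioo {μ : Measure ℝ} {α c η : ℝ} (hα : 0 < α) (hη : 0 < η)
    (hfin : ∀ x, 0 < x → μ (Ioi x) < ∞)
    (h : Tendsto (fun x => x ^ α * μ.real (Ioi x)) (𝓝[>] 0) (𝓝 c)) :
    Tendsto (fun x => x ^ α * μ.real (Ioo x η)) (𝓝[>] 0) (𝓝 c) := by
  have hlim := h.sub ((tendsto_rpow_nhdsGT_zero hα).mul_const (μ.real (Ici η)))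
  rw [zero_mul, sub_zero] at hlim
  refine hlim.congr' ?_
  filter_upwards [Ioo_mem_nhdsGT hη] with x ⟨hx, hxη⟩
  have hsplit : μ.real (Ioi x) = μ.real (Ioo x η) + μ.real (Ici η) := by
    rw [← Ioo_union_Ici_eq_Ioi hxη]
    exact measureReal_union ((Iio_disjoint_Ici le_rfl).mono_left Ioo_subset_Iio_self)
      measurableSet_Ici
      (measure_mono Ioo_subset_Ioi_self |>.trans_lt (hfin x hx)).ne
      (measure_mono (Ici_subset_Ioi.2 hxη) |>.trans_lt (hfin x hx)).ne
  rw [hsplit]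
  ring

theorem intervalIntegrable_measureReal_Ioo {μ : Measure ℝ} {ε η : ℝ} (hε : 0 < ε) (hη : 0 < η)
    (hfin : ∀ x, 0 < x → μ (Ioi x) < ∞) :
    IntervalIntegrable (fun t => μ.real (Ioo t η)) volume ε η := by
  refine AntitoneOn.intervalIntegrable (fun s hs t _ hst => ?_)
  have hs : 0 < s := lt_of_lt_of_le (lt_min hε hη) hs.1
  exact measureReal_mono (Ioo_subset_Ioo_left hst)
    (measure_mono Ioo_subset_Ioi_self |>.trans_lt (hfin s hs)).ne

theorem tendsto_rpow_sub_one_mul_setIntegral_Ico_sub {μ : Measure ℝ} {α c η : ℝ}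
    (hα : 1 < α) (hη : 0 < η) (hfin : ∀ x, 0 < x → μ (Ioi x) < ∞)
    (h : Tendsto (fun x => x ^ α * μ.real (Ioi x)) (𝓝[>] 0) (𝓝 c)) :
    Tendsto (fun ε => ε ^ (α - 1) * ∫ x in Ico ε η, (x - ε) ∂μ) (𝓝[>] 0)
      (𝓝 (c / (α - 1))) := by
  refine (tendsto_rpow_sub_one_mul_integral_of_tendsto_rpow_mul hα hη
    (fun ε hε => intervalIntegrable_measureReal_Ioo hε hη hfin)
    (tendsto_rpow_mul_measureReal_Ioo (by linarith) hη hfin h)).congr' ?_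
  filter_upwards [Ioo_mem_nhdsGT hη] with ε ⟨hε, hεη⟩
  rw [setIntegral_Ico_sub_eq_intervalIntegral_measureReal_Ioo hεη.le]
  exact (measure_mono (Ico_subset_Ici_self.trans (Ici_subset_Ioi.2 (half_lt_self hε))) |>.trans_lt
    (hfin _ (half_pos hε))).ne

theorem map_neg_apply_Ioi (μ : Measure ℝ) (x : ℝ) : μ.map Neg.neg (Ioi x) = μ (Iio (-x)) := by
  rw [Measure.map_apply measurable_neg measurableSet_Ioi, neg_preimage, neg_Ioi]

theorem setIntegral_Ioc_neg_sub_eq_setIntegral_map_neg (μ : Measure ℝ) (a b : ℝ) :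
    ∫ x in Ioc (-b) (-a), (-a - x) ∂μ = ∫ x in Ico a b, (x - a) ∂(μ.map Neg.neg) := by
  rw [setIntegral_map measurableSet_Ico (by fun_prop) measurable_neg.aemeasurable,
    neg_preimage, neg_Ico]
  congr 1 with x
  ring

theorem stmt8_general (α cp cm η : ℝ) (ν : Measure ℝ)
    (hα1 : 1 < α) (hη : 0 < η)
    (hfinp : ∀ x : ℝ, 0 < x → ν (Ioi x) < ⊤)
    (hfinm : ∀ x : ℝ, 0 < x → ν (Iio (-x)) < ⊤)
    (hp : Tendsto (fun x : ℝ => x ^ α * (ν (Ioi x)).toReal) (𝓝[>] 0) (𝓝 cp))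
    (hm : Tendsto (fun x : ℝ => x ^ α * (ν (Iio (-x))).toReal) (𝓝[>] 0) (𝓝 cm)) :
    Tendsto (fun ε : ℝ =>
        ε ^ (α - 1) *
          ((∫ x in Ioc (-η) (-ε), (-ε - x) ∂ν) + ∫ x in Ico ε η, (ε - x) ∂ν))
      (𝓝[>] 0) (𝓝 ((cm - cp) / (α - 1))) := by
  have hpos := tendsto_rpow_sub_one_mul_setIntegral_Ico_sub hα1 hη hfinp hp
  have hneg := tendsto_rpow_sub_one_mul_setIntegral_Ico_sub (μ := ν.map Neg.neg) hα1 hη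
    (by simpa only [map_neg_apply_Ioi] using hfinm)
    (by simpa only [measureReal_def, map_neg_apply_Ioi] using hm)
  rw [sub_div]
  refine (hneg.sub hpos).congr fun ε => ?_
  have hflip : ∫ x in Ico ε η, (ε - x) ∂ν = -∫ x in Ico ε η, (x - ε) ∂ν := by
    rw [← integral_neg]
    simp only [neg_sub]
  rw [setIntegral_Ioc_neg_sub_eq_setIntegral_map_neg, hflip]
  ring

/-- for a Lévy-type measure `ν` on `ℝ` (no atom at `0`, finite tails) with
stable-like tail asymptotics `x^α ν((x,∞)) → c₊` and `x^α ν((−∞,−x)) → c₋` as `x → 0⁺`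
(`α ∈ (1,2)`), the drift correction satisfies
`ε^{α−1} (∫_{(−η,−ε]} (−ε−x) ν(dx) + ∫_{[ε,η)} (ε−x) ν(dx)) → (c₋ − c₊)/(α − 1)`. -/
theorem stmt8 (α cp cm η : ℝ) (ν : Measure ℝ)
    (hα1 : 1 < α) (hα2 : α < 2) (hcp : 0 ≤ cp) (hcm : 0 ≤ cm) (hη : 0 < η)
    (h0 : ν {0} = 0)
    (hfinp : ∀ x : ℝ, 0 < x → ν (Ioi x) < ⊤)
    (hfinm : ∀ x : ℝ, 0 < x → ν (Iio (-x)) < ⊤)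
    (hp : Tendsto (fun x : ℝ => x ^ α * (ν (Ioi x)).toReal) (𝓝[>] 0) (𝓝 cp))
    (hm : Tendsto (fun x : ℝ => x ^ α * (ν (Iio (-x))).toReal) (𝓝[>] 0) (𝓝 cm)) :
    Tendsto (fun ε : ℝ =>
        ε ^ (α - 1) *
          ((∫ x in Ioc (-η) (-ε), (-ε - x) ∂ν) + ∫ x in Ico ε η, (ε - x) ∂ν))
      (𝓝[>] 0) (𝓝 ((cm - cp) / (α - 1))) :=
  stmt8_general α cp cm η ν hα1 hη hfinp hfinm hp hm
end

section
/- Let α ∈ (0,2), let c ≥ 0 and C < ∞, and let ν be a measure on (0,∞) with y^α ν((y,∞)) ≤ C for all y > 0 and y^α ν((y,∞)) → c as y → 0⁺. Then for every x > 0: lim_{ε → 0⁺} ε^α ∫_{(εx,∞)} min(u²/ε², 1) ν(du) = α c ∫_x^∞ min(z², 1) z^{−1−α} dz. -/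
open MeasureTheory Filter Topology Set

/-! By the layer-cake formula, `min (u²/ε², 1) = ∫₀¹ 𝟙[ε√t < u] dt` turns the left-hand side into
`∫₀¹ ε^α ν((ε m_t, ∞)) dt` with `m_t = max x √t ≥ x`. Each integrand equals
`m_t^(-α) · (ε m_t)^α ν((ε m_t, ∞))`, so it is bounded by `C x^(-α)` and tends to `c m_t^(-α)`;
dominated convergence gives the limit `c ∫₀¹ m_t^(-α) dt`. The same layer-cake identity for the
α-stable measure `α z^(-1-α) dz`, whose tail at `y` is `y^(-α)`, identifies this limit with the
right-hand side. -/

lemma setOf_lt_min_sq_div_inter_Ioi {x ε t : ℝ} (hx : 0 < x) (hε : 0 < ε) (ht : t < 1) :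
    {u : ℝ | t < min (u ^ 2 / ε ^ 2) 1} ∩ Ioi (ε * x) = Ioi (ε * max x √t) := by
  ext u
  simp only [mem_inter_iff, mem_ofPred_eq, mem_Ioi, lt_min_iff, ht, and_true,
    ← lt_div_iff₀' hε, max_lt_iff]
  rw [and_comm, and_congr_right_iff]
  intro hxu
  rw [← div_pow, Real.sqrt_lt' (hx.trans hxu)]

lemma setIntegral_min_sq_div_eq_integral_tail (ν : Measure ℝ) {x ε : ℝ} (hx : 0 < x)
    (hε : 0 < ε) (hfin : ν (Ioi (ε * x)) ≠ ⊤) :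
    ∫ u in Ioi (ε * x), min (u ^ 2 / ε ^ 2) 1 ∂ν =
      ∫ t in Ioo 0 1, (ν (Ioi (ε * max x √t))).toReal := by
  have : IsFiniteMeasure (ν.restrict (Ioi (ε * x))) := isFiniteMeasure_restrict.2 hfin
  have hcont : Continuous fun u : ℝ => min (u ^ 2 / ε ^ 2) 1 := by fun_prop
  have hint : Integrable (fun u => min (u ^ 2 / ε ^ 2) 1) (ν.restrict (Ioi (ε * x))) :=
    (integrable_const 1).mono' hcont.aestronglyMeasurable (ae_of_all _ fun u => by
      rw [Real.norm_of_nonneg (by positivity)]; exact min_le_right _ _)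
  have hlevel : ∀ t, (ν.restrict (Ioi (ε * x))).real {u | t < min (u ^ 2 / ε ^ 2) 1} =
      (ν ({u | t < min (u ^ 2 / ε ^ 2) 1} ∩ Ioi (ε * x))).toReal := fun t =>
    congrArg ENNReal.toReal (Measure.restrict_apply (measurableSet_lt measurable_const
      hcont.measurable))
  rw [hint.integral_eq_integral_meas_lt (ae_of_all _ fun u => by positivity),
    setIntegral_eq_of_subset_of_forall_sdiff_eq_zero measurableSet_Ioi Ioo_subset_Ioi_self]
  · refine setIntegral_congr_fun measurableSet_Ioo fun t ht => ?_
    rw [hlevel, setOf_lt_min_sq_div_inter_Ioi hx hε ht.2]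
  · rintro t ⟨ht0, ht⟩
    have hempty : {u : ℝ | t < min (u ^ 2 / ε ^ 2) 1} = ∅ :=
      eq_empty_of_forall_notMem fun u hu =>
        ht ⟨ht0, (mem_ofPred_eq ▸ hu).trans_le (min_le_right _ _)⟩
    rw [hlevel, hempty, empty_inter, measure_empty, ENNReal.toReal_zero]

noncomputable def stableLevyMeasure (α : ℝ) : Measure ℝ :=
  (volume.restrict (Ioi 0)).withDensity fun z => ENNReal.ofReal (α * z ^ (-1 - α))

section
variable {α : ℝ}

lemma setIntegral_stableLevyMeasure (hα : 0 ≤ α) {x : ℝ} (hx : 0 ≤ x) (f : ℝ → ℝ) :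
    ∫ z in Ioi x, f z ∂stableLevyMeasure α = ∫ z in Ioi x, α * z ^ (-1 - α) * f z := by
  rw [stableLevyMeasure, setIntegral_withDensity_eq_setIntegral_toReal_smul (by fun_prop)
    (ae_of_all _ fun _ => ENNReal.ofReal_lt_top) _ measurableSet_Ioi,
    Measure.restrict_restrict measurableSet_Ioi, Ioi_inter_Ioi, max_eq_left hx]
  refine setIntegral_congr_fun measurableSet_Ioi fun z hz => ?_
  have : 0 ≤ z := hx.trans hz.le
  rw [smul_eq_mul, ENNReal.toReal_ofReal (by positivity)]

lemma stableLevyMeasure_Ioi (hα : 0 < α) {y : ℝ} (hy : 0 < y) :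
    stableLevyMeasure α (Ioi y) = ENNReal.ofReal (y ^ (-α)) := by
  have hint : IntegrableOn (fun z : ℝ => α * z ^ (-1 - α)) (Ioi y) :=
    (integrableOn_Ioi_rpow_of_lt (by linarith) hy).const_mul α
  rw [stableLevyMeasure, withDensity_apply _ measurableSet_Ioi,
    Measure.restrict_restrict measurableSet_Ioi, Ioi_inter_Ioi, max_eq_left hy.le,
    ← ofReal_integral_eq_lintegral_ofReal hint
      (ae_restrict_of_forall_mem measurableSet_Ioi fun z hz => by
        have : 0 ≤ z := hy.le.trans hz.le
        positivity),
    integral_const_mul, integral_Ioi_rpow_of_lt (by linarith) hy]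
  rw [show -1 - α + 1 = -α by ring, neg_div_neg_eq, mul_div_cancel₀ _ hα.ne']

lemma integral_Ioo_max_sqrt_rpow_neg (hα : 0 < α) {x : ℝ} (hx : 0 < x) :
    ∫ t in Ioo 0 1, max x √t ^ (-α) = α * ∫ z in Ioi x, min (z ^ 2) 1 * z ^ (-1 - α) := by
  have hlayer := setIntegral_min_sq_div_eq_integral_tail (stableLevyMeasure α) hx one_pos
    (by rw [one_mul, stableLevyMeasure_Ioi hα hx]; exact ENNReal.ofReal_ne_top)
  simp only [one_mul, one_pow, div_one] at hlayer
  rw [setIntegral_stableLevyMeasure hα.le hx.le] at hlayer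
  calc ∫ t in Ioo 0 1, max x √t ^ (-α)
      = ∫ t in Ioo 0 1, (stableLevyMeasure α (Ioi (max x √t))).toReal := by
        refine setIntegral_congr_fun measurableSet_Ioo fun t _ => ?_
        rw [stableLevyMeasure_Ioi hα (hx.trans_le (le_max_left _ _)),
          ENNReal.toReal_ofReal (by positivity)]
    _ = ∫ z in Ioi x, α * z ^ (-1 - α) * min (z ^ 2) 1 := hlayer.symm
    _ = α * ∫ z in Ioi x, min (z ^ 2) 1 * z ^ (-1 - α) := by
        rw [← integral_const_mul]
        congr 1 with z
        ring

end

lemma rpow_mul_eq_rpow_neg_mul_mul_rpow (α T : ℝ) {ε m : ℝ} (hε : 0 < ε) (hm : 0 < m) :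
    ε ^ α * T = m ^ (-α) * ((ε * m) ^ α * T) := by
  rw [Real.mul_rpow hε.le hm.le, Real.rpow_neg hm.le]
  field_simp

lemma tendsto_rpow_mul_comp_mul {α c m : ℝ} {f : ℝ → ℝ} (hm : 0 < m)
    (hf : Tendsto (fun y => y ^ α * f y) (𝓝[>] 0) (𝓝 c)) :
    Tendsto (fun ε => ε ^ α * f (ε * m)) (𝓝[>] 0) (𝓝 (c * m ^ (-α))) := by
  have hscale : Tendsto (fun ε : ℝ => ε * m) (𝓝[>] 0) (𝓝[>] 0) := by
    refine tendsto_nhdsWithin_of_tendsto_nhds_of_eventually_within _ ?_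
      (eventually_mem_nhdsWithin.mono fun ε hε => mul_pos hε hm)
    simpa using ((continuous_mul_const m).tendsto 0).mono_left nhdsWithin_le_nhds
  rw [mul_comm c]
  refine (tendsto_const_nhds.mul (hf.comp hscale)).congr' ?_
  filter_upwards [self_mem_nhdsWithin] with ε (hε : 0 < ε)
  exact (rpow_mul_eq_rpow_neg_mul_mul_rpow α _ hε hm).symm

lemma rpow_mul_comp_mul_le {α C x m ε : ℝ} {f : ℝ → ℝ} (hα : 0 ≤ α) (hC : 0 ≤ C)
    (hf : ∀ y, 0 < y → y ^ α * f y ≤ C) (hx : 0 < x) (hxm : x ≤ m) (hε : 0 < ε) :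
    ε ^ α * f (ε * m) ≤ C * x ^ (-α) := by
  have hm : 0 < m := hx.trans_le hxm
  calc ε ^ α * f (ε * m) = m ^ (-α) * ((ε * m) ^ α * f (ε * m)) :=
        rpow_mul_eq_rpow_neg_mul_mul_rpow α _ hε hm
    _ ≤ m ^ (-α) * C := by gcongr; exact hf _ (mul_pos hε hm)
    _ ≤ x ^ (-α) * C :=
        mul_le_mul_of_nonneg_right (Real.rpow_le_rpow_of_nonpos hx hxm (neg_nonpos.2 hα)) hC
    _ = C * x ^ (-α) := mul_comm _ _

theorem stmt9_general (α c C : ℝ) (ν : Measure ℝ)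
    (hα1 : 0 < α)
    (hfin : ∀ y : ℝ, 0 < y → ν (Ioi y) < ⊤)
    (hbnd : ∀ y : ℝ, 0 < y → y ^ α * (ν (Ioi y)).toReal ≤ C)
    (hlim : Tendsto (fun y : ℝ => y ^ α * (ν (Ioi y)).toReal) (𝓝[>] 0) (𝓝 c)) :
    ∀ x : ℝ, 0 < x →
      Tendsto (fun ε : ℝ => ε ^ α * ∫ u in Ioi (ε * x), min (u ^ 2 / ε ^ 2) 1 ∂ν)
        (𝓝[>] 0)
        (𝓝 (α * c * ∫ z in Ioi x, min (z ^ 2) 1 * z ^ (-1 - α))) := by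
  intro x hx
  have hC : 0 ≤ C := (by positivity : (0 : ℝ) ≤ 1 ^ α * (ν (Ioi 1)).toReal).trans (hbnd 1 one_pos)
  rw [mul_comm α, mul_assoc, ← integral_Ioo_max_sqrt_rpow_neg hα1 hx, ← integral_const_mul]
  refine Tendsto.congr' ?_ (tendsto_integral_filter_of_dominated_convergence
    (F := fun ε t => ε ^ α * (ν (Ioi (ε * max x √t))).toReal) (fun _ => C * x ^ (-α))
    ?_ ?_ (integrableOn_const measure_Ioo_lt_top.ne) ?_)
  · filter_upwards [self_mem_nhdsWithin] with ε (hε : 0 < ε)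
    rw [integral_const_mul,
      setIntegral_min_sq_div_eq_integral_tail ν hx hε (hfin _ (mul_pos hε hx)).ne]
  · filter_upwards [self_mem_nhdsWithin] with ε (hε : 0 < ε)
    have hanti : Antitone fun t : ℝ => ν (Ioi (ε * max x √t)) := fun s t hst =>
      measure_mono (Ioi_subset_Ioi (by gcongr))
    exact (measurable_const.mul
      (ENNReal.measurable_toReal.comp hanti.measurable)).aestronglyMeasurable
  · filter_upwards [self_mem_nhdsWithin] with ε (hε : 0 < ε)
    refine ae_of_all _ fun t => ?_
    rw [Real.norm_of_nonneg (by positivity)]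
    exact rpow_mul_comp_mul_le hα1.le hC hbnd hx (le_max_left _ _) hε
  · exact ae_of_all _ fun t => tendsto_rpow_mul_comp_mul (hx.trans_le (le_max_left _ _)) hlim

/-- for a measure `ν` on `(0,∞)` with uniformly bounded stable-like tails
`y^α ν((y,∞)) ≤ C` and tail limit `y^α ν((y,∞)) → c` as `y → 0⁺` (`α ∈ (0,2)`), for every
`x > 0`,
`ε^α ∫_{(εx,∞)} min(u²/ε², 1) ν(du) → α c ∫_x^∞ min(z²,1) z^{−1−α} dz` as `ε → 0⁺`. -/
theorem stmt9 (α c C : ℝ) (ν : Measure ℝ)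
    (hα1 : 0 < α) (hα2 : α < 2) (hc : 0 ≤ c)
    (hfin : ∀ y : ℝ, 0 < y → ν (Ioi y) < ⊤)
    (hbnd : ∀ y : ℝ, 0 < y → y ^ α * (ν (Ioi y)).toReal ≤ C)
    (hlim : Tendsto (fun y : ℝ => y ^ α * (ν (Ioi y)).toReal) (𝓝[>] 0) (𝓝 c)) :
    ∀ x : ℝ, 0 < x →
      Tendsto (fun ε : ℝ => ε ^ α * ∫ u in Ioi (ε * x), min (u ^ 2 / ε ^ 2) 1 ∂ν)
        (𝓝[>] 0)
        (𝓝 (α * c * ∫ z in Ioi x, min (z ^ 2) 1 * z ^ (-1 - α))) :=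
  stmt9_general α c C ν hα1 hfin hbnd hlim
end

section
/- For all α ∈ (0,2) and all real 0 < b ≤ a: (2/π) · sin(πα/2) · (a b)^{α/2} · ∫_b^a (z² + (α/2) a²) · ((a − z)/(z − b))^{α/2} · z^{−1} dz = α a^{α+2} − (α/2) (a b)^{1+α/2} · ( (a/b + b/a)(1 + α/2) − α ). -/
/-!
Put `r = α / 2`. The substitution `z = b + (a - b) t` turns the integral into integrals against
the weight `w(t) = ((1 - t) / t) ^ r` on `(0, 1)`. As beta integrals,
`∫ w = Γ(1 - r) Γ(1 + r) = π r / sin (π r)` and `∫ t w = (1 - r) / 2 · π r / sin (π r)`.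
The remaining term `∫ w(t) · l / (1 + l t) dt`, with `l = (a - b) / b`, is not a beta integral;
writing `l / (1 + l t) = ∫₀ˡ dx / (1 + x t)²` and swapping the integrals reduces it to
`∫ w(t) / (1 + x t)² dt`, which the Möbius substitution `t = u / (1 + x - x u)` (fixing `0` and `1`)
turns into `(1 + x) ^ (r - 1) ∫ w`. Integrating in `x` gives `π / sin (π r) · ((1 + l) ^ r - 1)`,
and `1 + l = a / b` produces the term `(a / b) ^ r`.
-/

open Real MeasureTheory Set intervalIntegral

theorem integral_rpow_mul_one_sub_rpow {p q : ℝ} (hp : 0 < p) (hq : 0 < q) :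
    ∫ t in (0 : ℝ)..1, t ^ (p - 1) * (1 - t) ^ (q - 1) = Gamma p * Gamma q / Gamma (p + q) := by
  have hbeta : Complex.betaIntegral p q = ↑(∫ t in (0 : ℝ)..1, t ^ (p - 1) * (1 - t) ^ (q - 1)) := by
    rw [Complex.betaIntegral, ← intervalIntegral.integral_ofReal]
    refine integral_congr fun t ht => ?_
    rw [uIcc_of_le zero_le_one] at ht
    push_cast
    rw [Complex.ofReal_cpow ht.1, Complex.ofReal_cpow (sub_nonneg.2 ht.2)]
    push_cast
    rfl
  have h := Complex.betaIntegral_eq_Gamma_mul_div p q (by simpa using hp) (by simpa using hq)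
  rw [hbeta, ← Complex.ofReal_add, Complex.Gamma_ofReal, Complex.Gamma_ofReal,
    Complex.Gamma_ofReal] at h
  exact_mod_cast h

theorem Gamma_one_sub_mul_Gamma_one_add {r : ℝ} (hr : r ≠ 0) :
    Gamma (1 - r) * Gamma (1 + r) = π * r / sin (π * r) := by
  rw [add_comm, Gamma_add_one hr, mul_left_comm, mul_comm (Gamma (1 - r)), Gamma_mul_Gamma_one_sub]
  ring

noncomputable def betaWeight (r t : ℝ) : ℝ := ((1 - t) / t) ^ r

theorem betaWeight_eq {r t : ℝ} (ht₀ : 0 ≤ t) (ht₁ : t ≤ 1) :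
    betaWeight r t = t ^ (-r) * (1 - t) ^ r := by
  rw [betaWeight, div_rpow (sub_nonneg.2 ht₁) ht₀, rpow_neg ht₀, div_eq_inv_mul]

theorem betaWeight_nonneg (r : ℝ) {t : ℝ} (ht₀ : 0 ≤ t) (ht₁ : t ≤ 1) : 0 ≤ betaWeight r t :=
  rpow_nonneg (div_nonneg (sub_nonneg.2 ht₁) ht₀) r

theorem continuousOn_betaWeight {r : ℝ} (hr : 0 ≤ r) : ContinuousOn (betaWeight r) (Ioi 0) :=
  ((continuousOn_const.sub continuousOn_id).div continuousOn_id
    fun _ ht => (mem_Ioi.1 ht).ne').rpow_const fun _ _ => Or.inr hr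

theorem intervalIntegrable_betaWeight {r : ℝ} (hr₀ : 0 ≤ r) (hr₁ : r < 1) :
    IntervalIntegrable (betaWeight r) volume 0 1 := by
  refine (intervalIntegrable_rpow' (by linarith : -1 < -r)).mono_fun
    (by unfold betaWeight; fun_prop : Measurable (betaWeight r)).aestronglyMeasurable ?_
  rw [uIoc_of_le zero_le_one, Filter.EventuallyLE, ae_restrict_iff' measurableSet_Ioc]
  refine Filter.Eventually.of_forall fun t ht => ?_
  have ht₀ : 0 ≤ t ^ (-r) := rpow_nonneg ht.1.le _
  have h1t : 0 ≤ 1 - t := sub_nonneg.2 ht.2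
  rw [betaWeight_eq ht.1.le ht.2, norm_of_nonneg (mul_nonneg ht₀ (rpow_nonneg h1t r)),
    norm_of_nonneg ht₀]
  exact mul_le_of_le_one_right ht₀ (rpow_le_one h1t (by linarith [ht.1]) hr₀)

theorem integral_betaWeight {r : ℝ} (hr₀ : 0 < r) (hr₁ : r < 1) :
    ∫ t in (0 : ℝ)..1, betaWeight r t = π * r / sin (π * r) := by
  have h := integral_rpow_mul_one_sub_rpow (p := 1 - r) (q := 1 + r) (by linarith) (by linarith)
  rw [show 1 - r + (1 + r) = 2 by ring, Gamma_two, div_one,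
    Gamma_one_sub_mul_Gamma_one_add hr₀.ne'] at h
  rw [← h]
  refine integral_congr_Ioo_of_le zero_le_one fun t ht => ?_
  rw [betaWeight_eq ht.1.le ht.2.le]
  ring_nf

theorem integral_mul_betaWeight {r : ℝ} (hr₀ : 0 < r) (hr₁ : r < 1) :
    ∫ t in (0 : ℝ)..1, t * betaWeight r t = (1 - r) / 2 * (π * r / sin (π * r)) := by
  have h := integral_rpow_mul_one_sub_rpow (p := 2 - r) (q := 1 + r) (by linarith) (by linarith)
  rw [show 2 - r + (1 + r) = 2 + 1 by ring, Gamma_add_one two_ne_zero, Gamma_two,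
    show 2 - r = 1 - r + 1 by ring, Gamma_add_one (by linarith), mul_assoc,
    Gamma_one_sub_mul_Gamma_one_add hr₀.ne'] at h
  rw [show (1 - r) / 2 * (π * r / sin (π * r)) = (1 - r) * (π * r / sin (π * r)) / (2 * 1) by ring,
    ← h]
  refine integral_congr_Ioo_of_le zero_le_one fun t ht => ?_
  rw [betaWeight_eq ht.1.le ht.2.le, show 1 - r + 1 - 1 = 1 + -r by ring, rpow_add ht.1, rpow_one]
  ring_nf

theorem one_add_mul_pos {x t : ℝ} (hx : -1 < x) (ht₀ : 0 ≤ t) (ht₁ : t ≤ 1) : 0 < 1 + x * t := by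
  nlinarith [mul_nonneg (by linarith : 0 ≤ 1 + x) ht₀]

theorem one_add_sub_mul_pos {x u : ℝ} (hx : -1 < x) (hu₀ : 0 ≤ u) (hu₁ : u ≤ 1) :
    0 < 1 + x - x * u := by
  nlinarith [mul_nonneg (by linarith : 0 ≤ 1 + x) (sub_nonneg.2 hu₁)]

theorem betaWeight_div_one_add_mul_sq_comp_mul_deriv {r x u : ℝ} (hx : -1 < x)
    (hu : u ∈ Ioo (0 : ℝ) 1) :
    betaWeight r (u / (1 + x - x * u)) / (1 + x * (u / (1 + x - x * u))) ^ 2 *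
        ((1 + x) / (1 + x - x * u) ^ 2) =
      (1 + x) ^ (r - 1) * betaWeight r u := by
  have hx' : 0 < 1 + x := by linarith
  have hD := (one_add_sub_mul_pos hx hu.1.le hu.2.le).ne'
  have hu₀ := hu.1.ne'
  have hw : (1 - u / (1 + x - x * u)) / (u / (1 + x - x * u)) = (1 + x) * ((1 - u) / u) := by
    rw [one_sub_div hD, div_div_div_cancel_right₀ hD]
    field_simp
    ring
  have hden : 1 + x * (u / (1 + x - x * u)) = (1 + x) / (1 + x - x * u) := by
    field_simp
    ring
  simp only [betaWeight, hw, hden, mul_rpow hx'.le (div_nonneg (sub_nonneg.2 hu.2.le) hu.1.le),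
    rpow_sub_one hx'.ne']
  field_simp

theorem intervalIntegrable_betaWeight_div_one_add_mul_sq {r x : ℝ} (hr₀ : 0 ≤ r) (hr₁ : r < 1)
    (hx : -1 < x) :
    IntervalIntegrable (fun t => betaWeight r t / (1 + x * t) ^ 2) volume 0 1 := by
  simp only [div_eq_mul_inv]
  refine (intervalIntegrable_betaWeight hr₀ hr₁).mul_continuousOn
    (ContinuousOn.inv₀ (by fun_prop) fun t ht => ?_)
  rw [uIcc_of_le zero_le_one] at ht
  exact (pow_pos (one_add_mul_pos hx ht.1 ht.2) 2).ne'

theorem integral_betaWeight_div_one_add_mul_sq {r x : ℝ} (hr₀ : 0 ≤ r) (hr₁ : r < 1)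
    (hx : -1 < x) :
    ∫ t in (0 : ℝ)..1, betaWeight r t / (1 + x * t) ^ 2 =
      (1 + x) ^ (r - 1) * ∫ t in (0 : ℝ)..1, betaWeight r t := by
  set ψ : ℝ → ℝ := fun u => u / (1 + x - x * u)
  set g : ℝ → ℝ := fun t => betaWeight r t / (1 + x * t) ^ 2
  have hD : ∀ u ∈ Icc (0 : ℝ) 1, 0 < 1 + x - x * u := fun u hu => one_add_sub_mul_pos hx hu.1 hu.2
  have hψ_deriv : ∀ u ∈ Icc (0 : ℝ) 1, HasDerivAt ψ ((1 + x) / (1 + x - x * u) ^ 2) u :=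
    fun u hu => ((hasDerivAt_id' u).div (((hasDerivAt_id' u).const_mul x).const_sub (1 + x))
      (hD u hu).ne').congr_deriv (by ring)
  have hψ_Icc : MapsTo ψ (Icc 0 1) (Icc 0 1) := fun u hu => by
    refine ⟨div_nonneg hu.1 (hD u hu).le, (div_le_one (hD u hu)).2 ?_⟩
    nlinarith [hu.2]
  have hψ_Ioo : MapsTo ψ (Ioo 0 1) (Ioo 0 1) := fun u hu => by
    have hDu := hD u (Ioo_subset_Icc_self hu)
    refine ⟨div_pos hu.1 hDu, (div_lt_one hDu).2 ?_⟩
    nlinarith [hu.2]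
  have hg_cont : ContinuousOn g (Ioo 0 1) :=
    ((continuousOn_betaWeight hr₀).mono fun _ ht => ht.1).div (by fun_prop)
      fun t ht => (pow_pos (one_add_mul_pos hx ht.1.le ht.2.le) 2).ne'
  have hcomp : EqOn (fun u => (g ∘ ψ) u * ((1 + x) / (1 + x - x * u) ^ 2))
      (fun u => (1 + x) ^ (r - 1) * betaWeight r u) (Ioo 0 1) :=
    fun u hu => betaWeight_div_one_add_mul_sq_comp_mul_deriv hx hu
  have hcomp_int : IntervalIntegrable (fun u => (g ∘ ψ) u * ((1 + x) / (1 + x - x * u) ^ 2))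
      volume 0 1 :=
    ((intervalIntegrable_betaWeight hr₀ hr₁).const_mul _).congr_uIoo
      (by rw [uIoo_of_le zero_le_one]; exact hcomp.symm)
  have hsubst := integral_comp_mul_deriv''' (a := 0) (b := 1)
    (HasDerivAt.continuousOn fun u hu => hψ_deriv u (by rwa [uIcc_of_le zero_le_one] at hu))
    (fun u hu => (hψ_deriv u (Ioo_subset_Icc_self (by simpa using hu))).hasDerivWithinAt)
    (hg_cont.mono (by simpa using hψ_Ioo.image_subset))
    (((intervalIntegrable_iff_integrableOn_Icc_of_le zero_le_one).1
      (intervalIntegrable_betaWeight_div_one_add_mul_sq hr₀ hr₁ hx)).mono_set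
      (by simpa using hψ_Icc.image_subset))
    (by rw [uIcc_of_le zero_le_one]
        exact (intervalIntegrable_iff_integrableOn_Icc_of_le zero_le_one).1 hcomp_int)
  rw [show ψ 0 = 0 by simp [ψ], show ψ 1 = 1 by simp [ψ]] at hsubst
  rw [← hsubst, integral_congr_Ioo_of_le zero_le_one hcomp, intervalIntegral.integral_const_mul]

theorem integrableOn_betaWeight_div_one_add_mul_sq {r l : ℝ} (hr₀ : 0 ≤ r) (hr₁ : r < 1) :
    IntegrableOn (Function.uncurry fun t x => betaWeight r t / (1 + x * t) ^ 2)
      (Ioc 0 1 ×ˢ Ioc 0 l) := by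
  have hdom : IntegrableOn (fun z : ℝ × ℝ => betaWeight r z.1) (Ioc 0 1 ×ˢ Ioc 0 l) := by
    rw [IntegrableOn, Measure.volume_eq_prod, ← Measure.prod_restrict]
    exact (intervalIntegrable_betaWeight hr₀ hr₁).1.comp_fst _
  refine hdom.mono' (by unfold betaWeight; fun_prop : Measurable _).aestronglyMeasurable ?_
  rw [ae_restrict_iff' (measurableSet_Ioc.prod measurableSet_Ioc)]
  filter_upwards with ⟨t, x⟩ ⟨ht, hx⟩
  have hw := betaWeight_nonneg r ht.1.le ht.2
  have h1 : 1 ≤ (1 + x * t) ^ 2 := by nlinarith [mul_nonneg hx.1.le ht.1.le]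
  rw [Function.uncurry_apply_pair, norm_of_nonneg (by positivity)]
  exact div_le_self hw h1

theorem div_one_add_mul_eq_integral {l t : ℝ} (hl : 0 ≤ l) (ht : 0 ≤ t) :
    l / (1 + l * t) = ∫ x in (0 : ℝ)..l, 1 / (1 + x * t) ^ 2 := by
  have hpos : ∀ x ∈ uIcc 0 l, 0 < 1 + x * t := fun x hx => by
    rw [uIcc_of_le hl] at hx
    nlinarith [mul_nonneg hx.1 ht]
  rw [integral_eq_sub_of_hasDerivAt (f := fun x => x / (1 + x * t)), zero_div, sub_zero]
  · exact fun x hx => ((hasDerivAt_id' x).div ((hasDerivAt_mul_const t).const_add 1)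
      (hpos x hx).ne').congr_deriv (by field_simp; ring)
  · exact (continuousOn_const.div (by fun_prop)
      fun x hx => (pow_pos (hpos x hx) 2).ne').intervalIntegrable

theorem integral_betaWeight_mul_div_one_add_mul {r l : ℝ} (hr₀ : 0 < r) (hr₁ : r < 1)
    (hl : 0 ≤ l) :
    ∫ t in (0 : ℝ)..1, betaWeight r t * (l / (1 + l * t)) = π / sin (π * r) * ((1 + l) ^ r - 1) :=
  calc ∫ t in (0 : ℝ)..1, betaWeight r t * (l / (1 + l * t))
      = ∫ t in (0 : ℝ)..1, ∫ x in (0 : ℝ)..l, betaWeight r t / (1 + x * t) ^ 2 := by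
        refine integral_congr fun t ht => ?_
        rw [uIcc_of_le zero_le_one] at ht
        simp only [div_one_add_mul_eq_integral hl ht.1, ← intervalIntegral.integral_const_mul,
          mul_one_div]
    _ = ∫ x in (0 : ℝ)..l, ∫ t in (0 : ℝ)..1, betaWeight r t / (1 + x * t) ^ 2 := by
        refine intervalIntegral_intervalIntegral_swap ?_
        rw [uIoc_of_le zero_le_one, uIoc_of_le hl]
        exact integrableOn_betaWeight_div_one_add_mul_sq hr₀.le hr₁
    _ = ∫ x in (0 : ℝ)..l, (1 + x) ^ (r - 1) * (π * r / sin (π * r)) := by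
        refine integral_congr fun x hx => ?_
        rw [uIcc_of_le hl] at hx
        simp only [integral_betaWeight_div_one_add_mul_sq hr₀.le hr₁ (by linarith [hx.1] : -1 < x),
          integral_betaWeight hr₀ hr₁]
    _ = π / sin (π * r) * ((1 + l) ^ r - 1) := by
        rw [intervalIntegral.integral_mul_const, integral_comp_add_left (fun x => x ^ (r - 1)),
          integral_rpow (Or.inl (by linarith)), sub_add_cancel, add_zero, one_rpow]
        field_simp

theorem integral_mul_rpow_sub_div_sub (f : ℝ → ℝ) (r a b : ℝ) :
    ∫ z in b..a, f z * ((a - z) / (z - b)) ^ r =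
      (a - b) * ∫ t in (0 : ℝ)..1, f ((a - b) * t + b) * betaWeight r t := by
  rcases eq_or_ne a b with rfl | hab
  · simp
  have hsubst := smul_integral_comp_mul_add (a := 0) (b := 1)
    (f := fun z => f z * ((a - z) / (z - b)) ^ r) (a - b) b
  rw [mul_zero, zero_add, mul_one, sub_add_cancel, smul_eq_mul] at hsubst
  rw [← hsubst]
  congr 1
  refine integral_congr_Ioo_of_le zero_le_one fun t ht => ?_
  have hw : (a - ((a - b) * t + b)) / ((a - b) * t + b - b) = (1 - t) / t := by
    have := sub_ne_zero.2 hab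
    have := ht.1.ne'
    field_simp
    ring
  simp only [hw, betaWeight]

theorem mul_sq_add_div_mul_eq {a b d r t w : ℝ} (hb : b ≠ 0) (hz : 0 < d * t + b) :
    d * (((d * t + b) ^ 2 + r * a ^ 2) / (d * t + b) * w) =
      d * b * w + d ^ 2 * (t * w) + r * a ^ 2 * (w * (d / b / (1 + d / b * t))) := by
  rw [show 1 + d / b * t = (d * t + b) / b by field_simp; ring, div_div_div_cancel_right₀ hb]
  field_simp
  ring

theorem integral_sq_add_mul_rpow_div {r a b : ℝ} (hr₀ : 0 < r) (hr₁ : r < 1) (hb : 0 < b)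
    (hba : b ≤ a) :
    ∫ z in b..a, (z ^ 2 + r * a ^ 2) * ((a - z) / (z - b)) ^ r / z =
      π * r / sin (π * r) *
        ((a - b) * b + (a - b) ^ 2 * (1 - r) / 2 + a ^ 2 * ((a / b) ^ r - 1)) := by
  set d := a - b with hd_def
  set l := d / b with hl_def
  have hd : 0 ≤ d := sub_nonneg.2 hba
  have hl : 0 ≤ l := div_nonneg hd hb.le
  have hw := intervalIntegrable_betaWeight hr₀.le hr₁
  have hcont : ContinuousOn (fun t => l / (1 + l * t)) (uIcc 0 1) := by
    refine continuousOn_const.div (by fun_prop) fun t ht => ?_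
    rw [uIcc_of_le zero_le_one] at ht
    exact (one_add_mul_pos (by linarith) ht.1 ht.2).ne'
  calc ∫ z in b..a, (z ^ 2 + r * a ^ 2) * ((a - z) / (z - b)) ^ r / z
      = ∫ z in b..a, (z ^ 2 + r * a ^ 2) / z * ((a - z) / (z - b)) ^ r :=
        integral_congr fun z _ => mul_div_right_comm _ _ _
    _ = d * ∫ t in (0 : ℝ)..1, ((d * t + b) ^ 2 + r * a ^ 2) / (d * t + b) * betaWeight r t :=
        integral_mul_rpow_sub_div_sub _ r a b
    _ = ∫ t in (0 : ℝ)..1, (d * b * betaWeight r t + d ^ 2 * (t * betaWeight r t) +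
          r * a ^ 2 * (betaWeight r t * (l / (1 + l * t)))) := by
        rw [← intervalIntegral.integral_const_mul]
        refine integral_congr fun t ht => ?_
        rw [uIcc_of_le zero_le_one] at ht
        exact mul_sq_add_div_mul_eq hb.ne' (by nlinarith [mul_nonneg hd ht.1])
    _ = d * b * (π * r / sin (π * r)) + d ^ 2 * ((1 - r) / 2 * (π * r / sin (π * r))) +
          r * a ^ 2 * (π / sin (π * r) * ((1 + l) ^ r - 1)) := by
        have hw₁ := hw.const_mul (d * b)
        have hw₂ := (hw.continuousOn_mul (continuousOn_id' _)).const_mul (d ^ 2)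
        rw [integral_add (hw₁.add hw₂) ((hw.mul_continuousOn hcont).const_mul _),
          integral_add hw₁ hw₂, intervalIntegral.integral_const_mul,
          intervalIntegral.integral_const_mul, intervalIntegral.integral_const_mul,
          integral_betaWeight hr₀ hr₁, integral_mul_betaWeight hr₀ hr₁,
          integral_betaWeight_mul_div_one_add_mul hr₀ hr₁ hl]
    _ = _ := by
        rw [show 1 + l = a / b by rw [hl_def, hd_def]; field_simp; ring]
        ring

/-- the definite integral identity, for `α ∈ (0,2)` and `0 < b ≤ a`,
`(2/π) sin(πα/2) (ab)^{α/2} ∫_b^a (z² + (α/2)a²) ((a−z)/(z−b))^{α/2} z^{−1} dz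
  = α a^{α+2} − (α/2)(ab)^{1+α/2} ((a/b + b/a)(1+α/2) − α)`. -/
theorem stmt11 (α a b : ℝ) (hα1 : 0 < α) (hα2 : α < 2) (hb : 0 < b) (hba : b ≤ a) :
    (2 / π) * Real.sin (π * α / 2) * (a * b) ^ (α / 2) *
        ∫ z in b..a, (z ^ 2 + α / 2 * a ^ 2) * ((a - z) / (z - b)) ^ (α / 2) / z =
      α * a ^ (α + 2) -
        α / 2 * (a * b) ^ (1 + α / 2) * ((a / b + b / a) * (1 + α / 2) - α) := by
  have ha : 0 < a := hb.trans_le hba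
  have hsin : 0 < sin (π * (α / 2)) :=
    sin_pos_of_pos_of_lt_pi (by positivity) (by nlinarith [pi_pos])
  rw [integral_sq_add_mul_rpow_div (by linarith) (by linarith) hb hba, mul_div_assoc π,
    show α + 2 = α / 2 + α / 2 + 2 by ring, rpow_add ha, rpow_add ha, rpow_two,
    rpow_add (mul_pos ha hb), rpow_one, mul_rpow ha.le hb.le, div_rpow ha.le hb.le]
  generalize sin (π * (α / 2)) = s at hsin ⊢
  field_simp
  ring
end

section
/- Let α ∈ (1,2), c₊ ≥ 0, M > 0, x₀ ∈ (0,M), and let ν̄ : (0,M] → [0,∞) be measurable, integrable on [x₀,M], with |y^{α+1} ν̄(y) − α c₊| ≤ C₀ y for all 0 < y < x₀ and some constant C₀. Let γ : [0,M] → [0,∞) be continuously differentiable with γ(0) = 0 and (1/C) ≤ γ'(y) ≤ C for all y ∈ [0,M] and some constant C ≥ 1. Define G(x) = ∫_{γ^{-1}(x)}^{M} ν̄(y) dy for x ∈ (0, γ(M)), where γ^{-1} is the inverse of γ. Then lim_{x → 0⁺} x^α G(x) = c₊ · γ'(0)^α, and sup_{x ∈ (0,γ(M))} x^α G(x) < ∞.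 -/
open MeasureTheory Filter Topology Set

/-!
On `(u, x₀)` the density `ν̄` differs from `α c₊ y^(-α-1)` by at most `C₀ y^(-α)`, and integrating
gives `|u^α ∫_u^M ν̄ - c₊| ≤ C₀ u / (α - 1) + K u^α`; hence `u^α ∫_u^M ν̄ → c₊` as `u → 0⁺`, and it
is bounded on `(0, M]`. For `u = γ⁻¹(x)` write `x^α G(x) = (x / u)^α · u^α ∫_u^M ν̄`: the ratio
`x / u` is the difference quotient of `γ` at `0`, so it tends to `γ'(0)`, and it is at most `C`
by the mean value inequality.
-/

section StableTail

variable {f : ℝ → ℝ} {α c C₀ x₀ M u : ℝ}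

lemma abs_sub_mul_rpow_neg_le {y v : ℝ} (hy : 0 < y) (h : |y ^ (α + 1) * v - α * c| ≤ C₀ * y) :
    |v - α * c * y ^ (-(α + 1))| ≤ C₀ * y ^ (-α) := by
  have hpos : 0 < y ^ (α + 1) := Real.rpow_pos_of_pos hy _
  have hlhs : v - α * c * y ^ (-(α + 1)) = (y ^ (α + 1) * v - α * c) / y ^ (α + 1) := by
    rw [Real.rpow_neg hy.le]; field_simp
  have hrhs : C₀ * y ^ (-α) = C₀ * y / y ^ (α + 1) := by
    rw [Real.rpow_add hy, Real.rpow_one, Real.rpow_neg hy.le]; field_simp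
  rw [hlhs, hrhs, abs_div, abs_of_pos hpos]
  exact div_le_div_of_nonneg_right h hpos.le

lemma ae_abs_sub_mul_rpow_neg_le
    (hf : ∀ y, 0 < y → y < x₀ → |y ^ (α + 1) * f y - α * c| ≤ C₀ * y) (hu : 0 < u) :
    ∀ᵐ y ∂volume.restrict (Ioc u x₀), |f y - α * c * y ^ (-(α + 1))| ≤ C₀ * y ^ (-α) := by
  rw [← Measure.restrict_congr_set Ioo_ae_eq_Ioc]
  filter_upwards [ae_restrict_mem measurableSet_Ioo] with y hy
  exact abs_sub_mul_rpow_neg_le (hu.trans hy.1) (hf y (hu.trans hy.1) hy.2)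

lemma zero_notMem_uIcc (hu : 0 < u) (hux : u ≤ x₀) : (0 : ℝ) ∉ uIcc u x₀ := by
  rw [uIcc_of_le hux]
  exact fun h => hu.not_ge h.1

lemma intervalIntegrable_of_abs_rpow_mul_sub_le (hfm : Measurable f)
    (hf : ∀ y, 0 < y → y < x₀ → |y ^ (α + 1) * f y - α * c| ≤ C₀ * y) (hu : 0 < u)
    (hux : u ≤ x₀) : IntervalIntegrable f volume u x₀ := by
  have hmain : IntervalIntegrable (fun y => α * c * y ^ (-(α + 1))) volume u x₀ :=
    (intervalIntegral.intervalIntegrable_rpow (Or.inr (zero_notMem_uIcc hu hux))).const_mul _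
  have herr : IntervalIntegrable (fun y => f y - α * c * y ^ (-(α + 1))) volume u x₀ := by
    refine ((intervalIntegral.intervalIntegrable_rpow (r := -α)
      (Or.inr (zero_notMem_uIcc hu hux))).const_mul C₀).mono_fun' (by fun_prop) ?_
    rw [uIoc_of_le hux]
    exact ae_abs_sub_mul_rpow_neg_le hf hu
  simpa using herr.add hmain

lemma integral_rpow_neg (hα : α ≠ 1) (hu : 0 < u) (hux : u ≤ x₀) :
    ∫ y in u..x₀, y ^ (-α) = (u ^ (1 - α) - x₀ ^ (1 - α)) / (α - 1) := by
  have hα' : α - 1 ≠ 0 := sub_ne_zero.2 hα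
  have hα'' : 1 - α ≠ 0 := sub_ne_zero.2 hα.symm
  rw [integral_rpow (Or.inr ⟨by simpa using hα, zero_notMem_uIcc hu hux⟩),
    show -α + 1 = 1 - α by ring]
  field_simp
  ring

lemma integral_stable_density (hα : α ≠ 0) (hu : 0 < u) (hux : u ≤ x₀) :
    ∫ y in u..x₀, α * c * y ^ (-(α + 1)) = c * (u ^ (-α) - x₀ ^ (-α)) := by
  rw [intervalIntegral.integral_const_mul,
    integral_rpow (Or.inr ⟨by simpa using hα, zero_notMem_uIcc hu hux⟩),
    show -(α + 1) + 1 = -α by ring]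
  field_simp
  ring

lemma abs_integral_sub_le (hα : 1 < α) (hfm : Measurable f)
    (hf : ∀ y, 0 < y → y < x₀ → |y ^ (α + 1) * f y - α * c| ≤ C₀ * y) (hu : 0 < u)
    (hux : u ≤ x₀) :
    |(∫ y in u..x₀, f y) - c * (u ^ (-α) - x₀ ^ (-α))| ≤
      C₀ * ((u ^ (1 - α) - x₀ ^ (1 - α)) / (α - 1)) := by
  have h0 := zero_notMem_uIcc hu hux
  rw [← integral_stable_density (by linarith) hu hux, ← intervalIntegral.integral_sub
      (intervalIntegrable_of_abs_rpow_mul_sub_le hfm hf hu hux)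
      ((intervalIntegral.intervalIntegrable_rpow (Or.inr h0)).const_mul _),
    ← integral_rpow_neg hα.ne' hu hux, ← intervalIntegral.integral_const_mul]
  rw [← Real.norm_eq_abs]
  refine intervalIntegral.norm_integral_le_of_norm_le hux ?_
    ((intervalIntegral.intervalIntegrable_rpow (μ := volume) (Or.inr h0)).const_mul C₀)
  simpa only [Real.norm_eq_abs] using
    (ae_restrict_iff' measurableSet_Ioc).1 (ae_abs_sub_mul_rpow_neg_le hf hu)

lemma abs_rpow_mul_integral_sub_le (hα : 1 < α) (hfm : Measurable f)
    (hf : ∀ y, 0 < y → y < x₀ → |y ^ (α + 1) * f y - α * c| ≤ C₀ * y)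
    (hfi : IntervalIntegrable f volume x₀ M) (hu : 0 < u) (hux : u < x₀) :
    |u ^ α * (∫ y in u..M, f y) - c| ≤
      C₀ * u / (α - 1) + u ^ α * (|c| * x₀ ^ (-α) + |∫ y in x₀..M, f y|) := by
  have hC₀ : 0 ≤ C₀ := nonneg_of_mul_nonneg_left ((abs_nonneg _).trans (hf u hu hux)) hu
  have hpow : 0 < u ^ α := Real.rpow_pos_of_pos hu α
  set D := (∫ y in u..x₀, f y) - c * (u ^ (-α) - x₀ ^ (-α))
  have hD : u ^ α * |D| ≤ C₀ * u / (α - 1) := calc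
    u ^ α * |D| ≤ u ^ α * (C₀ * ((u ^ (1 - α) - x₀ ^ (1 - α)) / (α - 1))) :=
      mul_le_mul_of_nonneg_left (abs_integral_sub_le hα hfm hf hu hux.le) hpow.le
    _ ≤ u ^ α * (C₀ * (u ^ (1 - α) / (α - 1))) := by
      gcongr
      exact sub_le_self _ (Real.rpow_nonneg (hu.trans hux).le _)
    _ = C₀ * (u ^ α * u ^ (1 - α)) / (α - 1) := by ring
    _ = C₀ * u / (α - 1) := by rw [← Real.rpow_add hu, add_sub_cancel, Real.rpow_one]
  have hsplit : u ^ α * (∫ y in u..M, f y) - c =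
      u ^ α * D - c * x₀ ^ (-α) * u ^ α + u ^ α * ∫ y in x₀..M, f y := by
    have hinv : u ^ α * u ^ (-α) = 1 := by
      rw [← Real.rpow_add hu, add_neg_cancel, Real.rpow_zero]
    rw [← intervalIntegral.integral_add_adjacent_intervals
      (intervalIntegrable_of_abs_rpow_mul_sub_le hfm hf hu hux.le) hfi]
    linear_combination c * hinv
  rw [hsplit]
  calc |u ^ α * D - c * x₀ ^ (-α) * u ^ α + u ^ α * ∫ y in x₀..M, f y|
      ≤ |u ^ α * D| + |c * x₀ ^ (-α) * u ^ α| + |u ^ α * ∫ y in x₀..M, f y| :=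
        (abs_add_le _ _).trans (by gcongr; exact abs_sub _ _)
    _ = u ^ α * |D| + u ^ α * (|c| * x₀ ^ (-α) + |∫ y in x₀..M, f y|) := by
        simp only [abs_mul, abs_of_pos hpow, abs_of_pos (Real.rpow_pos_of_pos (hu.trans hux) _)]
        ring
    _ ≤ _ := by linarith

lemma tendsto_rpow_mul_integral (hα : 1 < α) (hfm : Measurable f)
    (hf : ∀ y, 0 < y → y < x₀ → |y ^ (α + 1) * f y - α * c| ≤ C₀ * y) (hx₀ : 0 < x₀)
    (hx₀M : x₀ ≤ M) (hfi : IntegrableOn f (Icc x₀ M)) :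
    Tendsto (fun u => u ^ α * ∫ y in u..M, f y) (𝓝[>] 0) (𝓝 c) := by
  set K := |c| * x₀ ^ (-α) + |∫ y in x₀..M, f y|
  have hbound : Tendsto (fun u : ℝ => C₀ * u / (α - 1) + u ^ α * K) (𝓝[>] 0) (𝓝 0) := by
    have hrpow := Real.continuous_rpow_const (q := α) (by linarith)
    have hcont : Continuous fun u : ℝ => C₀ * u / (α - 1) + u ^ α * K := by fun_prop
    simpa [Real.zero_rpow (by linarith : α ≠ 0)] using
      tendsto_nhdsWithin_of_tendsto_nhds (hcont.tendsto 0)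
  rw [← tendsto_sub_nhds_zero_iff]
  refine squeeze_zero_norm' ?_ hbound
  filter_upwards [Ioo_mem_nhdsGT hx₀] with u hu
  exact abs_rpow_mul_integral_sub_le hα hfm hf
    (IntegrableOn.intervalIntegrable (by rwa [uIcc_of_le hx₀M])) hu.1 hu.2

lemma abs_intervalIntegral_le_integral_abs (hx₀u : x₀ ≤ u) (huM : u ≤ M)
    (hfi : IntegrableOn f (Icc x₀ M)) : |∫ y in u..M, f y| ≤ ∫ y in Icc x₀ M, |f y| := calc
  |∫ y in u..M, f y| ≤ ∫ y in u..M, |f y| := by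
    simpa only [Real.norm_eq_abs] using
      intervalIntegral.norm_integral_le_integral_norm (f := f) (μ := volume) huM
  _ = ∫ y in Ioc u M, |f y| := intervalIntegral.integral_of_le huM
  _ ≤ ∫ y in Icc x₀ M, |f y| :=
    setIntegral_mono_set hfi.abs (ae_of_all _ fun _ => abs_nonneg _)
      (Ioc_subset_Icc_self.trans (Icc_subset_Icc_left hx₀u)).eventuallyLE

lemma exists_abs_rpow_mul_integral_le (hα : 1 < α) (hfm : Measurable f)
    (hf : ∀ y, 0 < y → y < x₀ → |y ^ (α + 1) * f y - α * c| ≤ C₀ * y)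
    (hx₀M : x₀ ≤ M) (hfi : IntegrableOn f (Icc x₀ M)) :
    ∃ B, ∀ u ∈ Ioc 0 M, |u ^ α * ∫ y in u..M, f y| ≤ B := by
  set K := |c| * x₀ ^ (-α) + |∫ y in x₀..M, f y|
  refine ⟨max (|c| + (C₀ * x₀ / (α - 1) + x₀ ^ α * K)) (M ^ α * ∫ y in Icc x₀ M, |f y|),
    fun u ⟨hu, huM⟩ => ?_⟩
  rcases lt_or_ge u x₀ with hux | hx₀u
  · have hC₀ : 0 ≤ C₀ := nonneg_of_mul_nonneg_left ((abs_nonneg _).trans (hf u hu hux)) hu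
    have hx₀ : 0 < x₀ := hu.trans hux
    have hK : 0 ≤ K := by positivity
    have hα' : 0 < α - 1 := by linarith
    refine le_max_of_le_left ?_
    calc |u ^ α * ∫ y in u..M, f y|
        ≤ |c| + |u ^ α * (∫ y in u..M, f y) - c| := by
          linarith [abs_sub_abs_le_abs_sub (u ^ α * ∫ y in u..M, f y) c]
      _ ≤ |c| + (C₀ * u / (α - 1) + u ^ α * K) := by
          gcongr
          exact abs_rpow_mul_integral_sub_le hα hfm hf
            (IntegrableOn.intervalIntegrable (by rwa [uIcc_of_le hx₀M])) hu hux
      _ ≤ |c| + (C₀ * x₀ / (α - 1) + x₀ ^ α * K) := by gcongr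
  · refine le_max_of_le_right ?_
    rw [abs_mul, abs_of_nonneg (Real.rpow_nonneg hu.le _)]
    exact mul_le_mul (Real.rpow_le_rpow hu.le huM (by linarith))
      (abs_intervalIntegral_le_integral_abs hx₀u huM hfi) (abs_nonneg _)
      (Real.rpow_nonneg (hu.le.trans huM) _)

end StableTail

section ChangeOfVariable

variable {g g' : ℝ → ℝ} {a b m : ℝ}

lemma mul_sub_le_sub_of_le_hasDerivWithinAt
    (hg : ∀ y ∈ Icc a b, HasDerivWithinAt g (g' y) (Icc a b) y) (hm : ∀ y ∈ Icc a b, m ≤ g' y)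
    {x y : ℝ} (hx : x ∈ Icc a b) (hy : y ∈ Icc a b) (hxy : x ≤ y) : m * (y - x) ≤ g y - g x := by
  have hderiv : ∀ t ∈ Icc a b,
      HasDerivWithinAt (fun t => g t - m * t) (g' t - m * 1) (Icc a b) t :=
    fun t ht => (hg t ht).sub ((hasDerivWithinAt_id t _).const_mul m)
  have hmono : MonotoneOn (fun t => g t - m * t) (Icc a b) := by
    refine monotoneOn_of_hasDerivWithinAt_nonneg (convex_Icc a b) (f' := fun t => g' t - m * 1)
      (fun t ht => (hderiv t ht).continuousWithinAt) (fun t ht => ?_) (fun t ht => ?_)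
    · exact (hderiv t (interior_subset ht)).mono interior_subset
    · simpa using hm t (interior_subset ht)
  linarith [hmono hx hy hxy]

lemma sub_le_mul_sub_of_hasDerivWithinAt_le
    (hg : ∀ y ∈ Icc a b, HasDerivWithinAt g (g' y) (Icc a b) y) (hm : ∀ y ∈ Icc a b, g' y ≤ m)
    {x y : ℝ} (hx : x ∈ Icc a b) (hy : y ∈ Icc a b) (hxy : x ≤ y) : g y - g x ≤ m * (y - x) := by
  have := mul_sub_le_sub_of_le_hasDerivWithinAt (g := fun t => -g t) (g' := fun t => -g' t)
    (m := -m) (fun t ht => (hg t ht).neg) (fun t ht => neg_le_neg (hm t ht)) hx hy hxy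
  linarith

lemma div_le_apply_and_apply_le_mul {γ γ' : ℝ → ℝ} {M C u : ℝ} (hγ0 : γ 0 = 0)
    (hγ : ∀ y ∈ Icc 0 M, HasDerivWithinAt γ (γ' y) (Icc 0 M) y)
    (hbnd : ∀ y ∈ Icc 0 M, 1 / C ≤ γ' y ∧ γ' y ≤ C) (hu : u ∈ Icc 0 M) :
    u / C ≤ γ u ∧ γ u ≤ C * u := by
  have h0 : (0 : ℝ) ∈ Icc 0 M := ⟨le_rfl, hu.1.trans hu.2⟩
  have hlo := mul_sub_le_sub_of_le_hasDerivWithinAt hγ (fun y hy => (hbnd y hy).1) h0 hu hu.1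
  have hhi := sub_le_mul_sub_of_hasDerivWithinAt_le hγ (fun y hy => (hbnd y hy).2) h0 hu hu.1
  rw [hγ0, sub_zero, sub_zero, one_div_mul_eq_div] at hlo
  rw [hγ0, sub_zero, sub_zero] at hhi
  exact ⟨hlo, hhi⟩

lemma mem_Ioc_and_le_mul_of_apply_eq {γ γ' : ℝ → ℝ} {M C u x : ℝ} (hC : 0 < C)
    (hγ0 : γ 0 = 0) (hγ : ∀ y ∈ Icc 0 M, HasDerivWithinAt γ (γ' y) (Icc 0 M) y)
    (hbnd : ∀ y ∈ Icc 0 M, 1 / C ≤ γ' y ∧ γ' y ≤ C) (hx : 0 < x) (hu : u ∈ Icc 0 M)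
    (hγu : γ u = x) : u ∈ Ioc 0 M ∧ x ≤ C * u ∧ u ≤ C * x := by
  obtain ⟨hlo, hhi⟩ := div_le_apply_and_apply_le_mul hγ0 hγ hbnd hu
  rw [hγu] at hlo hhi
  have hu0 : u ≠ 0 := by
    rintro rfl
    exact hx.ne (hγ0 ▸ hγu)
  exact ⟨⟨lt_of_le_of_ne hu.1 (Ne.symm hu0), hu.2⟩, hhi, (div_le_iff₀' hC).1 hlo⟩

lemma rpow_mul_eq_div_rpow_mul {α x u v : ℝ} (hx : 0 ≤ x) (hu : 0 < u) :
    x ^ α * v = (x / u) ^ α * (u ^ α * v) := by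
  rw [Real.div_rpow hx hu.le]
  field_simp [(Real.rpow_pos_of_pos hu α).ne']

lemma rpow_mul_le_of_le_mul {α x u v C B : ℝ} (hα : 0 ≤ α) (hx : 0 < x) (hu : 0 < u)
    (hxu : x ≤ C * u) (hB : |u ^ α * v| ≤ B) : x ^ α * v ≤ C ^ α * B := by
  have hxu' : x / u ≤ C := (div_le_iff₀ hu).2 hxu
  have hxu0 : 0 ≤ (x / u) ^ α := Real.rpow_nonneg (div_nonneg hx.le hu.le) α
  calc x ^ α * v = (x / u) ^ α * (u ^ α * v) := rpow_mul_eq_div_rpow_mul hx.le hu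
    _ ≤ (x / u) ^ α * |u ^ α * v| := mul_le_mul_of_nonneg_left (le_abs_self _) hxu0
    _ ≤ C ^ α * B :=
      mul_le_mul (Real.rpow_le_rpow (div_nonneg hx.le hu.le) hxu' hα) hB (abs_nonneg _)
        (Real.rpow_nonneg ((div_nonneg hx.le hu.le).trans hxu') α)

lemma tendsto_rpow_mul_comp_of_hasDerivWithinAt {F φ γ : ℝ → ℝ} {α c d M C : ℝ} (hα : 0 ≤ α)
    (hF : Tendsto (fun u => u ^ α * F u) (𝓝[>] 0) (𝓝 c)) (hγ0 : γ 0 = 0)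
    (hd : HasDerivWithinAt γ d (Icc 0 M) 0)
    (hφ : ∀ᶠ x in 𝓝[>] 0, φ x ∈ Ioc 0 M ∧ γ (φ x) = x ∧ φ x ≤ C * x) :
    Tendsto (fun x => x ^ α * F (φ x)) (𝓝[>] 0) (𝓝 (c * d ^ α)) := by
  have hφ0 : Tendsto φ (𝓝[>] 0) (𝓝[Ioc 0 M] 0) := by
    refine tendsto_nhdsWithin_iff.2 ⟨?_, hφ.mono fun x hx => hx.1⟩
    have hCx : Tendsto (fun x : ℝ => C * x) (𝓝[>] 0) (𝓝 0) := by
      simpa using tendsto_nhdsWithin_of_tendsto_nhds ((continuous_const_mul C).tendsto 0)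
    exact tendsto_of_tendsto_of_tendsto_of_le_of_le' tendsto_const_nhds hCx
      (hφ.mono fun x hx => hx.1.1.le) (hφ.mono fun x hx => hx.2.2)
  have hslope : Tendsto (fun x => x / φ x) (𝓝[>] 0) (𝓝 d) := by
    have hsub : Ioc 0 M ⊆ Icc 0 M \ {0} := fun y hy => ⟨Ioc_subset_Icc_self hy, hy.1.ne'⟩
    refine ((hasDerivWithinAt_iff_tendsto_slope.1 hd).comp
      (hφ0.mono_right (nhdsWithin_mono _ hsub))).congr' ?_
    filter_upwards [hφ] with x hx
    simp [slope_def_field, hx.2.1, hγ0]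
  have hprod := (hslope.rpow_const (Or.inr hα)).mul
    (hF.comp (hφ0.mono_right (nhdsWithin_mono _ Ioc_subset_Ioi_self)))
  rw [mul_comm c]
  refine hprod.congr' ?_
  filter_upwards [hφ, self_mem_nhdsWithin] with x hx (hx0 : 0 < x)
  exact (rpow_mul_eq_div_rpow_mul hx0.le hx.1.1).symm

end ChangeOfVariable

theorem stmt14_general (α cp M x₀ C₀ C : ℝ) (nubar γ γ' γinv : ℝ → ℝ)
    (hα1 : 1 < α) (hM : 0 < M) (hx₀ : 0 < x₀) (hx₀M : x₀ < M)
    (hC : 1 ≤ C)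
    (hνmeas : Measurable nubar)
    (hνint : IntegrableOn nubar (Icc x₀ M))
    (hstable : ∀ y : ℝ, 0 < y → y < x₀ → |y ^ (α + 1) * nubar y - α * cp| ≤ C₀ * y)
    (hγ0 : γ 0 = 0)
    (hγderiv : ∀ y ∈ Icc (0 : ℝ) M, HasDerivWithinAt γ (γ' y) (Icc (0 : ℝ) M) y)
    (hγ'bnd : ∀ y ∈ Icc (0 : ℝ) M, 1 / C ≤ γ' y ∧ γ' y ≤ C)
    (hinv2 : ∀ x ∈ Icc (0 : ℝ) (γ M), γ (γinv x) = x ∧ γinv x ∈ Icc (0 : ℝ) M) :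
    Tendsto (fun x : ℝ => x ^ α * ∫ y in γinv x..M, nubar y) (𝓝[>] 0)
        (𝓝 (cp * γ' 0 ^ α)) ∧
      ∃ C₂ : ℝ, ∀ x ∈ Ioo (0 : ℝ) (γ M), x ^ α * ∫ y in γinv x..M, nubar y ≤ C₂ := by
  have hC' : 0 < C := by linarith
  have hinv : ∀ x ∈ Ioo 0 (γ M), γinv x ∈ Ioc 0 M ∧ x ≤ C * γinv x ∧ γinv x ≤ C * x :=
    fun x hx => mem_Ioc_and_le_mul_of_apply_eq hC' hγ0 hγderiv hγ'bnd hx.1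
      (hinv2 x (Ioo_subset_Icc_self hx)).2 (hinv2 x (Ioo_subset_Icc_self hx)).1
  have hγM : 0 < γ M := (div_pos hM hC').trans_le
    (div_le_apply_and_apply_le_mul hγ0 hγderiv hγ'bnd ⟨hM.le, le_rfl⟩).1
  obtain ⟨B, hB⟩ := exists_abs_rpow_mul_integral_le hα1 hνmeas hstable hx₀M.le hνint
  refine ⟨tendsto_rpow_mul_comp_of_hasDerivWithinAt (C := C) (by linarith)
    (tendsto_rpow_mul_integral hα1 hνmeas hstable hx₀ hx₀M.le hνint) hγ0
    (hγderiv 0 ⟨le_rfl, hM.le⟩) ?_, C ^ α * B, fun x hx => ?_⟩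
  · filter_upwards [Ioo_mem_nhdsGT hγM] with x hx
    exact ⟨(hinv x hx).1, (hinv2 x (Ioo_subset_Icc_self hx)).1, (hinv x hx).2.2⟩
  · obtain ⟨hmem, hxle, -⟩ := hinv x hx
    exact rpow_mul_le_of_le_mul (by linarith) hx.1 hmem.1 hxle (hB _ hmem)

/-- let `ν̄ ≥ 0` on `(0,M]` behave near `0` like the stable density
`α c₊ y^{−α−1}` up to first order (`α ∈ (1,2)`), and let `γ` be a `C¹` change of variable
on `[0,M]` with `γ(0) = 0` and `1/C ≤ γ' ≤ C`, with inverse `γinv`.  Then the tail mass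
`G(x) = ∫_{γ⁻¹(x)}^M ν̄(y) dy` of the pushforward satisfies
`x^α G(x) → c₊ γ'(0)^α` as `x → 0⁺` and `sup_{x ∈ (0,γ(M))} x^α G(x) < ∞`. -/
theorem stmt14 (α cp M x₀ C₀ C : ℝ) (nubar γ γ' γinv : ℝ → ℝ)
    (hα1 : 1 < α) (hα2 : α < 2) (hcp : 0 ≤ cp) (hM : 0 < M) (hx₀ : 0 < x₀) (hx₀M : x₀ < M)
    (hC : 1 ≤ C)
    (hνmeas : Measurable nubar) (hνnn : ∀ y ∈ Ioc (0 : ℝ) M, 0 ≤ nubar y)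
    (hνint : IntegrableOn nubar (Icc x₀ M))
    (hstable : ∀ y : ℝ, 0 < y → y < x₀ → |y ^ (α + 1) * nubar y - α * cp| ≤ C₀ * y)
    (hγ0 : γ 0 = 0)
    (hγderiv : ∀ y ∈ Icc (0 : ℝ) M, HasDerivWithinAt γ (γ' y) (Icc (0 : ℝ) M) y)
    (hγ'cont : ContinuousOn γ' (Icc (0 : ℝ) M))
    (hγ'bnd : ∀ y ∈ Icc (0 : ℝ) M, 1 / C ≤ γ' y ∧ γ' y ≤ C)
    (hinv1 : ∀ y ∈ Icc (0 : ℝ) M, γinv (γ y) = y)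
    (hinv2 : ∀ x ∈ Icc (0 : ℝ) (γ M), γ (γinv x) = x ∧ γinv x ∈ Icc (0 : ℝ) M) :
    Tendsto (fun x : ℝ => x ^ α * ∫ y in γinv x..M, nubar y) (𝓝[>] 0)
        (𝓝 (cp * γ' 0 ^ α)) ∧
      ∃ C₂ : ℝ, ∀ x ∈ Ioo (0 : ℝ) (γ M), x ^ α * ∫ y in γinv x..M, nubar y ≤ C₂ :=
  stmt14_general α cp M x₀ C₀ C nubar γ γ' γinv hα1 hM hx₀ hx₀M hC hνmeas hνint hstable hγ0 hγderiv
    hγ'bnd hinv2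
end
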